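/- arXiv:2410.20858 — 3 statements merged into one kernel-verified Lean document; each statement's English description precedes it below -/
import Mathlib

section
/- Let ν ∈ P(E) satisfy ∫ e^{αφ} dν < ∞ for every α > 0, let F : P_φ(E) → (−∞,+∞] be measurable, and set I(μ) := H(μ|ν) + F(μ). If I is lower semi-continuous on P_φ(E) and F is bounded from below on P_φ(E), then for every c ∈ ℝ the sublevel set {μ ∈ P_φ(E) : I(μ) ≤ c} is compact in P_φ(E). -/
open MeasureTheory Filter Topology Set

noncomputable section

/-- `P_φ(E)`: Borel probability measures with finite `φ`-integral. -/
structure Pphi (E : Type*) [MeasurableSpace E] (φ : E → ℝ) where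
  toPM : MeasureTheory.ProbabilityMeasure E
  finInt : ∫⁻ x, ENNReal.ofReal (φ x) ∂(toPM : MeasureTheory.Measure E) < ⊤

namespace Pphi

variable {E : Type*} [MeasurableSpace E] {φ : E → ℝ}

/-- The underlying measure. -/
def m (μ : Pphi E φ) : Measure E := (μ.toPM : Measure E)

instance (μ : Pphi E φ) : IsProbabilityMeasure μ.m := μ.toPM.prop

/-- The topology of `P_φ(E)`: induced by weak convergence together with convergence of
the `φ`-integrals. -/
instance instTop [TopologicalSpace E] [OpensMeasurableSpace E] :
    TopologicalSpace (Pphi E φ) :=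
  TopologicalSpace.induced (fun μ => ((μ.toPM : ProbabilityMeasure E), ∫ x, φ x ∂μ.m))
    inferInstance

/-- Convex combination `(1-ε)μ + εν` in `P_φ(E)` (junk value `μ` if `ε ∉ [0,1]`). -/
def comb (μ ν : Pphi E φ) (ε : ℝ) : Pphi E φ :=
  if h : 0 ≤ ε ∧ ε ≤ 1 then
    { toPM := ⟨ENNReal.ofReal (1 - ε) • μ.m + ENNReal.ofReal ε • ν.m, by
        constructor
        rw [Measure.add_apply, Measure.smul_apply, Measure.smul_apply, measure_univ,
          measure_univ, smul_eq_mul, smul_eq_mul, mul_one, mul_one,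
          ← ENNReal.ofReal_add (by linarith [h.2]) h.1]
        norm_num⟩
      finInt := by
        show (∫⁻ x, ENNReal.ofReal (φ x)
            ∂(ENNReal.ofReal (1 - ε) • μ.m + ENNReal.ofReal ε • ν.m)) < ⊤
        rw [lintegral_add_measure, lintegral_smul_measure, lintegral_smul_measure]
        exact ENNReal.add_lt_top.mpr
          ⟨ENNReal.mul_lt_top ENNReal.ofReal_lt_top μ.finInt,
           ENNReal.mul_lt_top ENNReal.ofReal_lt_top ν.finInt⟩ }
  else μ

end Pphi

open scoped Classical in
/-- Relative entropy `H(μ|ν) = ∫ log (dμ/dν) dμ` if `μ ≪ ν` (and the integral exists),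
`+∞` otherwise. -/
def relEnt {E : Type*} [MeasurableSpace E] (μ ν : Measure E) : EReal :=
  if μ ≪ ν ∧ MeasureTheory.Integrable (fun x => Real.log ((μ.rnDeriv ν x).toReal)) μ
  then ((∫ x, Real.log ((μ.rnDeriv ν x).toReal) ∂μ : ℝ) : EReal)
  else ⊤

variable {E : Type*} [MetricSpace E] [CompleteSpace E]
  [TopologicalSpace.SeparableSpace E] [MeasurableSpace E] [BorelSpace E]

/-!
Young's inequality `f g ≤ f log f - f + e^g`, applied to the density `f = dμ/dν`, gives
`∫ g dμ ≤ H(μ|ν) - 1 + ∫ e^g dν`. On `{H(·|ν) ≤ M}` this yields, for `g = s 1_A`, uniform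
absolute continuity with respect to `ν`, hence tightness (`ν` is tight on a Polish space), and,
for `g = a (φ - R)⁺`, uniform integrability of `φ`. By Prokhorov the weak closure `K` of this set
is compact; uniform integrability passes to `K` and makes `μ ↦ ∫ φ dμ` continuous on `K`, so `K`
is compact in `P_φ(E)` as well. As `F` is bounded below, the sublevel set of `I` lies in `K`, and
it is closed since `I` is lower semicontinuous.
-/

open Real
open scoped BoundedContinuousFunction

lemma mul_le_mul_log_sub_add_exp {u : ℝ} (hu : 0 ≤ u) (v : ℝ) :
    u * v ≤ u * log u - u + exp v := by
  rcases hu.eq_or_lt with rfl | hu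
  · simpa using (exp_pos v).le
  · have h := add_one_le_exp (v - log u)
    rw [exp_sub, exp_log hu, le_div_iff₀ hu] at h
    nlinarith

section Entropy

variable {α : Type*} [MeasurableSpace α] {μ ν : Measure α}

lemma relEnt_le_coe_iff {M : ℝ} :
    relEnt μ ν ≤ M ↔ μ ≪ ν ∧ Integrable (llr μ ν) μ ∧ ∫ x, llr μ ν x ∂μ ≤ M := by
  unfold relEnt
  split_ifs with h
  · simp [h, llr_def]
  · simp only [top_le_iff, EReal.coe_ne_top, false_iff]
    exact fun h' => h ⟨h'.1, h'.2.1⟩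

lemma integral_le_integral_llr_sub_add_integral_exp [IsFiniteMeasure μ] [SigmaFinite ν]
    (hμν : μ ≪ ν) (hllr : Integrable (llr μ ν) μ) {g : α → ℝ} (hg : Measurable g)
    (hg0 : 0 ≤ g) (hexp : Integrable (fun x => exp (g x)) ν) :
    Integrable g μ ∧ ∫ x, g x ∂μ ≤ ∫ x, llr μ ν x ∂μ - μ.real univ + ∫ x, exp (g x) ∂ν := by
  set f : α → ℝ := fun x => (μ.rnDeriv ν x).toReal
  have hf0 : ∀ x, 0 ≤ f x := fun x => ENNReal.toReal_nonneg
  have hflogf : Integrable (fun x => f x * log (f x)) ν :=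
    (integrable_rnDeriv_mul_log_iff hμν).2 hllr
  have hf : Integrable f ν := Measure.integrable_toReal_rnDeriv
  have hbound : Integrable (fun x => f x * log (f x) - f x + exp (g x)) ν :=
    (hflogf.sub hf).add hexp
  have hfg : Integrable (fun x => f x * g x) ν := by
    refine hbound.mono'
      ((Measure.measurable_rnDeriv μ ν).ennreal_toReal.mul hg).aestronglyMeasurable
      (ae_of_all _ fun x => ?_)
    rw [Real.norm_of_nonneg (mul_nonneg (hf0 x) (hg0 x))]
    exact mul_le_mul_log_sub_add_exp (hf0 x) (g x)
  refine ⟨(integrable_toReal_rnDeriv_mul_iff hμν).1 hfg, ?_⟩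
  calc ∫ x, g x ∂μ = ∫ x, f x * g x ∂ν := (integral_toReal_rnDeriv_mul hμν).symm
    _ ≤ ∫ x, (f x * log (f x) - f x + exp (g x)) ∂ν :=
      integral_mono hfg hbound fun x => mul_le_mul_log_sub_add_exp (hf0 x) (g x)
    _ = ∫ x, llr μ ν x ∂μ - μ.real univ + ∫ x, exp (g x) ∂ν := by
      rw [integral_add (f := fun x => f x * log (f x) - f x) (hflogf.sub hf) hexp,
        integral_sub hflogf hf, integral_rnDeriv_mul_log hμν,
        Measure.integral_toReal_rnDeriv hμν, measureReal_def]

lemma integral_le_of_relEnt_le [IsProbabilityMeasure μ] [SigmaFinite ν] {M : ℝ}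
    (hμ : relEnt μ ν ≤ M) {g : α → ℝ} (hg : Measurable g) (hg0 : 0 ≤ g)
    (hexp : Integrable (fun x => exp (g x)) ν) :
    Integrable g μ ∧ ∫ x, g x ∂μ ≤ M - 1 + ∫ x, exp (g x) ∂ν := by
  obtain ⟨hμν, hllr, hM⟩ := relEnt_le_coe_iff.1 hμ
  obtain ⟨hgμ, hle⟩ := integral_le_integral_llr_sub_add_integral_exp hμν hllr hg hg0 hexp
  refine ⟨hgμ, hle.trans ?_⟩
  simp only [probReal_univ]
  linarith

variable [IsProbabilityMeasure μ] [IsProbabilityMeasure ν] {M : ℝ}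

lemma mul_measureReal_le_of_relEnt_le (hμ : relEnt μ ν ≤ M) {s : ℝ} (hs : 0 ≤ s) {A : Set α}
    (hA : MeasurableSet A) : s * μ.real A ≤ M + exp s * ν.real A := by
  have hexp_eq : (fun x => exp (A.indicator (fun _ => s) x)) =
      fun x => 1 + A.indicator (fun _ => exp s - 1) x := by
    ext x; by_cases hx : x ∈ A <;> simp [hx]
  have hexpInt : Integrable (fun x => exp (A.indicator (fun _ => s) x)) ν := by
    rw [hexp_eq]; exact (integrable_const 1).add ((integrable_const _).indicator hA)
  obtain ⟨-, hle⟩ := integral_le_of_relEnt_le hμ (measurable_const.indicator hA)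
    (Set.indicator_nonneg fun _ _ => hs) hexpInt
  rw [hexp_eq, integral_add (integrable_const 1) ((integrable_const _).indicator hA),
    integral_indicator_const _ hA, integral_indicator_const _ hA] at hle
  simp only [integral_const, probReal_univ, smul_eq_mul] at hle
  nlinarith [measureReal_nonneg (μ := ν) (s := A)]

lemma mul_integral_max_sub_le_of_relEnt_le (hμ : relEnt μ ν ≤ M) {φ : α → ℝ} (hφ : Measurable φ)
    {a : ℝ} (ha : 0 < a) (hexp : Integrable (fun x => exp (a * φ x)) ν) (R : ℝ) :
    Integrable (fun x => max (φ x - R) 0) μ ∧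
      a * ∫ x, max (φ x - R) 0 ∂μ ≤ M + exp (-(a * R)) * ∫ x, exp (a * φ x) ∂ν := by
  have hdom : Integrable (fun x => 1 + exp (-(a * R)) * exp (a * φ x)) ν :=
    (integrable_const 1).add (hexp.const_mul _)
  have hle : ∀ x, exp (a * max (φ x - R) 0) ≤ 1 + exp (-(a * R)) * exp (a * φ x) := by
    intro x
    have hpos := mul_pos (exp_pos (-(a * R))) (exp_pos (a * φ x))
    rcases le_total (φ x - R) 0 with h | h
    · rw [max_eq_right h, mul_zero, exp_zero]
      linarith
    · rw [max_eq_left h, ← exp_add, show a * (φ x - R) = -(a * R) + a * φ x by ring]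
      linarith
  have hg : Measurable fun x => a * max (φ x - R) 0 := by fun_prop
  have hexpInt : Integrable (fun x => exp (a * max (φ x - R) 0)) ν :=
    hdom.mono' hg.exp.aestronglyMeasurable
      (ae_of_all _ fun x => by rw [norm_of_nonneg (exp_pos _).le]; exact hle x)
  obtain ⟨hint, hbound⟩ := integral_le_of_relEnt_le hμ hg
    (fun x => mul_nonneg ha.le (le_max_right _ _)) hexpInt
  refine ⟨(hint.const_mul a⁻¹).congr (ae_of_all _ fun x => by field_simp), ?_⟩
  have := integral_mono hexpInt hdom hle
  rw [integral_add (integrable_const 1) (hexp.const_mul _), integral_const_mul] at this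
  rw [integral_const_mul] at hbound
  simp only [integral_const, probReal_univ, smul_eq_mul, one_mul] at this
  linarith

end Entropy

def truncation {X : Type*} [TopologicalSpace X] {f : X → ℝ} (hf : Continuous f) (n : ℕ) :
    X →ᵇ ℝ :=
  .mkOfBound ⟨fun x => min (max (f x) 0) n, by fun_prop⟩ n fun x y => by
    simp only [ContinuousMap.coe_mk, Real.dist_eq, abs_sub_le_iff]
    constructor <;> linarith [min_le_right (max (f x) 0) n, min_le_right (max (f y) 0) n,
      le_min (le_max_right (f x) 0) n.cast_nonneg, le_min (le_max_right (f y) 0) n.cast_nonneg]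

lemma truncation_apply {X : Type*} [TopologicalSpace X] {f : X → ℝ} (hf : Continuous f) (n : ℕ)
    (x : X) : truncation hf n x = min (max (f x) 0) n := rfl

section UniformIntegrability

variable {X : Type*} [MeasurableSpace X]

def UniformlyIntegrableWrt (f : X → ℝ) (S : Set (ProbabilityMeasure X)) : Prop :=
  ∀ ε > 0, ∀ᶠ R in atTop, ∀ μ ∈ S, ∫⁻ x, ENNReal.ofReal (f x - R) ∂μ ≤ ENNReal.ofReal ε

lemma integrable_and_abs_integral_sub_integral_min_le {μ : Measure X} [IsFiniteMeasure μ]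
    {f : X → ℝ} (hf : Measurable f) (hf0 : 0 ≤ f) {R ε : ℝ} (hR : 0 ≤ R) (hε : 0 ≤ ε)
    (htail : ∫⁻ x, ENNReal.ofReal (f x - R) ∂μ ≤ ENNReal.ofReal ε) :
    Integrable f μ ∧ |∫ x, f x ∂μ - ∫ x, min (f x) R ∂μ| ≤ ε := by
  have hsplit : ∀ x, min (f x) R + max (f x - R) 0 = f x := fun x => by
    rcases le_total (f x) R with h | h <;> simp [h]
  have hpos_lintegral :
      ∫⁻ x, ENNReal.ofReal (max (f x - R) 0) ∂μ = ∫⁻ x, ENNReal.ofReal (f x - R) ∂μ := by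
    simp
  have hpos : Integrable (fun x => max (f x - R) 0) μ := by
    refine (lintegral_ofReal_ne_top_iff_integrable (f := fun x => max (f x - R) 0) (by fun_prop)
      (ae_of_all _ fun x => le_max_right _ _)).1 ?_
    rw [hpos_lintegral]
    exact (htail.trans_lt ENNReal.ofReal_lt_top).ne
  have hmin : Integrable (fun x => min (f x) R) μ :=
    (integrable_const R).mono' (by fun_prop) (ae_of_all _ fun x => by
      rw [norm_of_nonneg (le_min (hf0 x) hR)]; exact min_le_right _ _)
  have hfμ : Integrable f μ := (hmin.add hpos).congr (ae_of_all _ hsplit)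
  have hdiff : ∫ x, f x ∂μ - ∫ x, min (f x) R ∂μ = ∫ x, max (f x - R) 0 ∂μ := by
    rw [← integral_sub hfμ hmin]
    exact integral_congr_ae (ae_of_all _ fun x => by linarith [hsplit x])
  refine ⟨hfμ, ?_⟩
  rw [hdiff, abs_of_nonneg (integral_nonneg fun x => le_max_right _ _),
    integral_eq_lintegral_of_nonneg_ae (f := fun x => max (f x - R) 0)
      (ae_of_all _ fun x => le_max_right _ _) (by fun_prop),
    hpos_lintegral]
  exact ENNReal.toReal_le_of_le_ofReal hε htail

variable [TopologicalSpace X] [OpensMeasurableSpace X] {f : X → ℝ}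

lemma ProbabilityMeasure.lowerSemicontinuous_lintegral_ofReal (hf : Continuous f) :
    LowerSemicontinuous fun μ : ProbabilityMeasure X => ∫⁻ x, ENNReal.ofReal (f x) ∂μ := by
  have hsup : ∀ x, ENNReal.ofReal (f x) = ⨆ n : ℕ, ENNReal.ofReal (truncation hf n x) := by
    intro x
    refine le_antisymm (le_iSup_of_le ⌈f x⌉₊ ?_) (iSup_le fun n => ?_)
    · rw [truncation_apply, min_eq_left (max_le (Nat.le_ceil _) (Nat.cast_nonneg _))]
      simp
    · calc ENNReal.ofReal (truncation hf n x) ≤ ENNReal.ofReal (max (f x) 0) :=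
            ENNReal.ofReal_le_ofReal (min_le_left _ _)
        _ = ENNReal.ofReal (f x) := by simp
  have hmono : Monotone fun (n : ℕ) x => ENNReal.ofReal (truncation hf n x) :=
    fun m n hmn x => ENNReal.ofReal_le_ofReal (min_le_min_left _ (Nat.cast_le.2 hmn))
  have heq : (fun μ : ProbabilityMeasure X => ∫⁻ x, ENNReal.ofReal (f x) ∂μ) =
      fun μ : ProbabilityMeasure X => ⨆ n : ℕ, ENNReal.ofReal (∫ x, truncation hf n x ∂μ) := by
    ext μ
    simp_rw [hsup, ofReal_integral_eq_lintegral_ofReal ((truncation hf _).integrable _)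
      (ae_of_all _ fun x => le_min (le_max_right _ _) (Nat.cast_nonneg _))]
    exact lintegral_iSup (fun n => by fun_prop) hmono
  rw [heq]
  exact lowerSemicontinuous_iSup fun n => (ENNReal.continuous_ofReal.comp
    (ProbabilityMeasure.continuous_integral_boundedContinuousFunction _)).lowerSemicontinuous

lemma UniformlyIntegrableWrt.closure {S : Set (ProbabilityMeasure X)}
    (hS : UniformlyIntegrableWrt f S) (hf : Continuous f) :
    UniformlyIntegrableWrt f (closure S) := by
  intro ε hε
  filter_upwards [hS ε hε] with R hR
  exact fun μ hμ => closure_minimal hR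
    ((ProbabilityMeasure.lowerSemicontinuous_lintegral_ofReal
      (hf.sub continuous_const)).isClosed_preimage _) hμ

lemma UniformlyIntegrableWrt.continuousOn_integral {S : Set (ProbabilityMeasure X)}
    (hS : UniformlyIntegrableWrt f S) (hf : Continuous f) (hf0 : 0 ≤ f) :
    ContinuousOn (fun μ : ProbabilityMeasure X => ∫ x, f x ∂μ) S := by
  refine TendstoUniformlyOn.continuousOn (p := atTop)
    (F := fun (n : ℕ) (μ : ProbabilityMeasure X) => ∫ x, truncation hf n x ∂μ) ?_
    (Frequently.of_forall fun n =>
      (ProbabilityMeasure.continuous_integral_boundedContinuousFunction _).continuousOn)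
  rw [Metric.tendstoUniformlyOn_iff]
  intro ε hε
  filter_upwards [tendsto_natCast_atTop_atTop.eventually (hS (ε / 2) (half_pos hε))]
    with n hn μ hμ
  have hmax : ∀ x, max (f x) 0 = f x := fun x => max_eq_left (hf0 x)
  simp only [truncation_apply, hmax, Real.dist_eq]
  exact (integrable_and_abs_integral_sub_integral_min_le hf.measurable hf0 n.cast_nonneg
    (half_pos hε).le (hn μ hμ)).2.trans_lt (half_lt_self hε)

end UniformIntegrability

lemma isTightMeasureSet_setOf_relEnt_le {X : Type*} [TopologicalSpace X] [T2Space X]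
    [MeasurableSpace X] [OpensMeasurableSpace X] {ν : Measure X} [IsProbabilityMeasure ν]
    (hν : IsTightMeasureSet {ν}) (M : ℝ) :
    IsTightMeasureSet {((μ : ProbabilityMeasure X) : Measure X) |
      μ ∈ {μ : ProbabilityMeasure X | relEnt μ ν ≤ M}} := by
  rw [isTightMeasureSet_iff_exists_isCompact_measure_compl_le] at hν ⊢
  intro ε hε
  obtain ⟨η, -, hη, hηε⟩ := ENNReal.lt_iff_exists_real_btwn.1 hε
  have hη : 0 < η := ENNReal.ofReal_pos.1 hη
  -- once `ν Kᶜ ≤ e^{-s}`, the entropy bound gives `s μ Kᶜ ≤ M + 1 ≤ |M| + 1 = s η`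
  set s := (|M| + 1) / η
  obtain ⟨K, hK, hνK⟩ := hν (ENNReal.ofReal (exp (-s))) (by simp [exp_pos])
  refine ⟨K, hK, ?_⟩
  rintro _ ⟨μ, hμ, rfl⟩
  have hνK : ν.real Kᶜ ≤ exp (-s) :=
    ENNReal.toReal_le_of_le_ofReal (exp_pos _).le (hνK ν rfl)
  have hμK := mul_measureReal_le_of_relEnt_le hμ (s := s) (by positivity) hK.measurableSet.compl
  have hμK' : (μ : Measure X).real Kᶜ ≤ η := by
    rw [← mul_le_mul_iff_of_pos_left (show 0 < s by positivity)]
    calc s * (μ : Measure X).real Kᶜ ≤ M + exp s * exp (-s) :=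
          hμK.trans (by gcongr)
      _ ≤ s * η := by
        rw [← exp_add, add_neg_cancel, exp_zero, div_mul_cancel₀ _ hη.ne']
        linarith [le_abs_self M]
  calc (μ : Measure X) Kᶜ = ENNReal.ofReal ((μ : Measure X).real Kᶜ) := by simp
    _ ≤ ENNReal.ofReal η := ENNReal.ofReal_le_ofReal hμK'
    _ ≤ ε := hηε.le

lemma uniformlyIntegrableWrt_setOf_relEnt_le {X : Type*} [MeasurableSpace X] {ν : Measure X}
    [IsProbabilityMeasure ν] {φ : X → ℝ} (hφ : Measurable φ)
    (hexp : ∀ a > 0, Integrable (fun x => exp (a * φ x)) ν) (M : ℝ) :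
    UniformlyIntegrableWrt φ {μ : ProbabilityMeasure X | relEnt μ ν ≤ M} := by
  intro ε hε
  -- for `R ≥ log C / a` the entropy bound gives `a ∫ (φ - R)⁺ dμ ≤ M + 1 ≤ |M| + 1 = a ε`
  set a := (|M| + 1) / ε
  have ha : 0 < a := by positivity
  set C := ∫ x, exp (a * φ x) ∂ν
  have hC : 0 < C := integral_exp_pos (hexp a ha)
  filter_upwards [eventually_ge_atTop (log C / a)] with R hR μ hμ
  obtain ⟨hint, hle⟩ := mul_integral_max_sub_le_of_relEnt_le hμ hφ ha (hexp a ha) R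
  have hCR : exp (-(a * R)) * C ≤ 1 := by
    rw [← exp_log hC, ← exp_add]
    exact exp_le_one_iff.2 (by rw [div_le_iff₀ ha] at hR; linarith)
  have hmax : ∫ x, max (φ x - R) 0 ∂μ ≤ ε := by
    rw [← mul_le_mul_iff_of_pos_left ha]
    calc _ ≤ M + 1 := hle.trans (by linarith)
      _ ≤ |M| + 1 := by linarith [le_abs_self M]
      _ = a * ε := (div_mul_cancel₀ _ hε.ne').symm
  calc ∫⁻ x, ENNReal.ofReal (φ x - R) ∂μ = ENNReal.ofReal (∫ x, max (φ x - R) 0 ∂μ) := by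
        rw [ofReal_integral_eq_lintegral_ofReal hint (ae_of_all _ fun x => le_max_right _ _)]
        simp
    _ ≤ ENNReal.ofReal ε := ENNReal.ofReal_le_ofReal hmax

lemma Pphi.isCompact_setOf_toPM_mem {X : Type*} [TopologicalSpace X] [MeasurableSpace X]
    [OpensMeasurableSpace X] {φ : X → ℝ} (hφ : Continuous φ) (hφ0 : 0 ≤ φ)
    {K : Set (ProbabilityMeasure X)} (hK : IsCompact K) (hKφ : UniformlyIntegrableWrt φ K) :
    IsCompact {μ : Pphi X φ | μ.toPM ∈ K} := by
  have hfin : ∀ μ ∈ K, ∫⁻ x, ENNReal.ofReal (φ x) ∂(μ : Measure X) < ⊤ := by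
    obtain ⟨R, hR, hR0⟩ := ((hKφ 1 one_pos).and (eventually_ge_atTop 0)).exists
    exact fun μ hμ => (integrable_and_abs_integral_sub_integral_min_le hφ.measurable hφ0 hR0
      zero_le_one (hR μ hμ)).1.lintegral_lt_top
  have hind : IsInducing fun μ : Pphi X φ => (μ.toPM, ∫ x, φ x ∂μ.m) := ⟨rfl⟩
  rw [hind.isCompact_iff]
  convert hK.image_of_continuousOn (continuousOn_id.prodMk (hKφ.continuousOn_integral hφ hφ0))
    using 1
  ext q
  constructor
  · rintro ⟨μ, hμ, rfl⟩
    exact ⟨μ.toPM, hμ, rfl⟩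
  · rintro ⟨μ, hμ, rfl⟩
    exact ⟨⟨μ, hfin μ hμ⟩, hμ, rfl⟩

theorem stmt2_general (φ : E → ℝ) (hφc : Continuous φ) (hφ0 : ∀ x, 0 ≤ φ x)
    (ν : Measure E) [IsProbabilityMeasure ν]
    (hexp : ∀ α : ℝ, 0 < α → ∫⁻ x, ENNReal.ofReal (Real.exp (α * φ x)) ∂ν < ⊤)
    (F : Pphi E φ → EReal)
    (hIlsc : LowerSemicontinuous (fun μ : Pphi E φ => relEnt μ.m ν + F μ))
    (hFbdd : ∃ cF : ℝ, ∀ μ : Pphi E φ, (cF : EReal) ≤ F μ) :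
    ∀ c : ℝ, IsCompact {μ : Pphi E φ | relEnt μ.m ν + F μ ≤ (c : EReal)} := by
  intro c
  obtain ⟨cF, hcF⟩ := hFbdd
  set T := {μ : ProbabilityMeasure E | relEnt μ ν ≤ ((c - cF : ℝ) : EReal)}
  have hexpInt : ∀ a > 0, Integrable (fun x => exp (a * φ x)) ν := fun a ha =>
    (lintegral_ofReal_ne_top_iff_integrable (by fun_prop)
      (ae_of_all _ fun _ => (exp_pos _).le)).1 (hexp a ha).ne
  have hK : IsCompact {μ : Pphi E φ | μ.toPM ∈ closure T} :=
    Pphi.isCompact_setOf_toPM_mem hφc hφ0 (isCompact_closure_of_isTightMeasureSet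
      (isTightMeasureSet_setOf_relEnt_le isTightMeasureSet_singleton _))
      ((uniformlyIntegrableWrt_setOf_relEnt_le hφc.measurable hexpInt _).closure hφc)
  refine hK.of_isClosed_subset (hIlsc.isClosed_preimage _) fun μ hμ => subset_closure ?_
  show relEnt μ.m ν ≤ ((c - cF : ℝ) : EReal)
  rw [EReal.coe_sub,
    EReal.le_sub_iff_add_le (.inl (EReal.coe_ne_bot _)) (.inl (EReal.coe_ne_top _))]
  exact (add_le_add le_rfl (hcF μ)).trans hμ

/-- if `I = H(·|ν) + F` is lower semi-continuous and `F` is bounded from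
below, then `I` has compact sublevel sets in `P_φ(E)`. -/
theorem stmt2 (φ : E → ℝ) (hφc : Continuous φ) (hφ0 : ∀ x, 0 ≤ φ x)
    (ν : Measure E) [IsProbabilityMeasure ν]
    (hexp : ∀ α : ℝ, 0 < α → ∫⁻ x, ENNReal.ofReal (Real.exp (α * φ x)) ∂ν < ⊤)
    (F : Pphi E φ → EReal) (hFbot : ∀ μ, F μ ≠ ⊥)
    (hFmeas : @Measurable (Pphi E φ) EReal (borel (Pphi E φ)) _ F)
    (hIlsc : LowerSemicontinuous (fun μ : Pphi E φ => relEnt μ.m ν + F μ))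
    (hFbdd : ∃ cF : ℝ, ∀ μ : Pphi E φ, (cF : EReal) ≤ F μ) :
    ∀ c : ℝ, IsCompact {μ : Pphi E φ | relEnt μ.m ν + F μ ≤ (c : EReal)} :=
  stmt2_general φ hφc hφ0 ν hexp F hIlsc hFbdd
end
end

section
/- Let μ̄ be a minimiser of I(μ) = H(μ|ν) + F(μ) over D_I ∩ A^ζ_Ψ. Assume: D_I is convex and F is differentiable at μ̄ w.r.t. the directions D_I; t ↦ Ψ_t(μ̄) is continuous; each Ψ_t is differentiable at μ̄ w.r.t. the directions P_φ(E) uniformly in t ∈ T; t ↦ δΨ_t/δμ(μ̄,x) is continuous for every x ∈ E; sup_{t∈T} |δΨ_t/δμ(μ̄,x)| ≤ D^Ψ(1+φ(x)); and there exist μ̃ ∈ D_I ∩ A^ζ and ε̃ > 0 with Ψ_t(μ̄) + ε̃⟨μ̃−μ̄, δΨ_t/δμ(μ̄)⟩ < 0 for all t ∈ T. Then: (1) every μ ∈ D_I ∩ A^ζ satisfying Ψ_t(μ̄) + ε̃⟨μ−μ̄, δΨ_t/δμ(μ̄)⟩ ≤ 0 for all t ∈ T has ∫_E |log(dμ̄/dν)|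 dμ < ∞; (2) μ̄ minimises μ ↦ ⟨μ, log(dμ̄/dν) + δF/δμ(μ̄)⟩ over all μ ∈ D_I ∩ A^ζ satisfying that family of linearised inequality constraints, and the minimum value equals H(μ̄|ν). -/
/-!
Write `f̄ = dμ̄/dν` and perturb `μ̄` along the segment `μ_ε = (1 - ε) μ̄ + ε μ`. If `μ` satisfies
the linearised inequality constraints with a margin that is uniform in `t`, the uniform
differentiability of `Ψ` keeps `μ_ε` feasible for small `ε`, so minimality of `μ̄` bounds the
difference quotients `ε⁻¹ (H(μ_ε|ν) - H(μ̄|ν))` from below by `-ε⁻¹ (F(μ_ε) - F(μ̄))`, which tends to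
`-⟨μ - μ̄, δF/δμ(μ̄)⟩`. By convexity of `x log x` the pointwise difference quotients of the
entropy integrand decrease as `ε ↓ 0`, so monotone convergence shows that their limit
`(log f̄ + 1) (dμ/dν - f̄)` is `ν`-integrable with integral at least that bound: this is
integrability of `log f̄` against `μ` together with the linearised optimality inequality.
A general `μ` is mixed with `μ̃`, whose margin is uniform in `t` by compactness of `T`, and the
mixing weight is sent to zero.
-/


open MeasureTheory Filter Topology Set
open scoped ENNReal NNReal

noncomputable section

/-- `G : P_φ(E) → ℝ` is differentiable at `μ` w.r.t. the set of directions `C`, with linear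
functional derivative `g` (normalised by `∫ g dμ = 0`). -/
def HasLFDerivWithinAt {E : Type*} [MeasurableSpace E] {φ : E → ℝ}
    (C : Set (Pphi E φ)) (G : Pphi E φ → ℝ) (μ : Pphi E φ) (g : E → ℝ) : Prop :=
  Measurable g ∧ (∀ μ' ∈ C, Integrable g μ'.m) ∧ (∫ x, g x ∂μ.m) = 0 ∧
  ∀ μ' ∈ C, Filter.Tendsto (fun ε : ℝ => ε⁻¹ * (G (μ.comb μ' ε) - G μ)) (𝓝[>] (0:ℝ))
    (𝓝 (∫ x, g x ∂μ'.m - ∫ x, g x ∂μ.m))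

/-- Variant of `HasLFDerivWithinAt` for `(−∞,+∞]`-valued functionals (finite on the
direction set). -/
def HasLFDerivWithinAtE {E : Type*} [MeasurableSpace E] {φ : E → ℝ}
    (C : Set (Pphi E φ)) (G : Pphi E φ → EReal) (μ : Pphi E φ) (g : E → ℝ) : Prop :=
  Measurable g ∧ (∀ μ' ∈ C, Integrable g μ'.m) ∧ (∫ x, g x ∂μ.m) = 0 ∧
  ∀ μ' ∈ C, Filter.Tendsto
    (fun ε : ℝ => ε⁻¹ * ((G (μ.comb μ' ε)).toReal - (G μ).toReal)) (𝓝[>] (0:ℝ))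
    (𝓝 (∫ x, g x ∂μ'.m - ∫ x, g x ∂μ.m))

open Real

lemma ConvexOn.slope_mono_along_segment {D : Set ℝ} {f : ℝ → ℝ} (hf : ConvexOn ℝ D f)
    {a b : ℝ} (ha : a ∈ D) (hb : b ∈ D) {s t : ℝ} (hs : 0 < s) (hst : s ≤ t) (ht : t ≤ 1) :
    s⁻¹ * (f ((1 - s) * a + s * b) - f a) ≤ t⁻¹ * (f ((1 - t) * a + t * b) - f a) := by
  have ht0 : 0 < t := hs.trans_le hst
  have hxt : (1 - t) * a + t * b ∈ D :=
    hf.1 ha hb (by linarith) ht0.le (by ring)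
  have hcomb : (1 - s) * a + s * b = (1 - s / t) * a + s / t * ((1 - t) * a + t * b) := by
    field_simp; ring
  have hw : 0 ≤ 1 - s / t := by rw [sub_nonneg, div_le_one ht0]; exact hst
  have hconv := hf.2 ha hxt hw (div_pos hs ht0).le (sub_add_cancel 1 (s / t))
  simp only [smul_eq_mul, ← hcomb] at hconv
  have key : f ((1 - s) * a + s * b) - f a ≤ s / t * (f ((1 - t) * a + t * b) - f a) := by
    linarith
  calc s⁻¹ * (f ((1 - s) * a + s * b) - f a)
      ≤ s⁻¹ * (s / t * (f ((1 - t) * a + t * b) - f a)) :=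
        mul_le_mul_of_nonneg_left key (inv_nonneg.2 hs.le)
    _ = t⁻¹ * (f ((1 - t) * a + t * b) - f a) := by field_simp

lemma HasDerivAt.tendsto_slope_along_segment {f : ℝ → ℝ} {f' a : ℝ} (hf : HasDerivAt f f' a)
    (b : ℝ) :
    Tendsto (fun ε => ε⁻¹ * (f ((1 - ε) * a + ε * b) - f a)) (𝓝[≠] 0) (𝓝 (f' * (b - a))) := by
  have hline : HasDerivAt (fun u : ℝ => a + u * (b - a)) (b - a) 0 := by
    simpa using ((hasDerivAt_id (0 : ℝ)).mul_const (b - a)).const_add a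
  have hcomp : HasDerivAt (fun u => f (a + u * (b - a))) (f' * (b - a)) 0 :=
    (by simpa using hf : HasDerivAt f f' (a + 0 * (b - a))).comp 0 hline
  refine (hasDerivAt_iff_tendsto_slope.1 hcomp).congr fun ε => ?_
  simp only [slope_def_field, sub_zero, zero_mul, add_zero, div_eq_inv_mul]
  congr 3
  ring

lemma tendsto_slope_mul_log_of_bddBelow {a b : ℝ} (ha : 0 ≤ a) (hb : 0 ≤ b) {ε : ℕ → ℝ}
    (hε : Tendsto ε atTop (𝓝[>] 0))
    (hbdd : BddBelow (range fun n => (ε n)⁻¹ *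
      (((1 - ε n) * a + ε n * b) * log ((1 - ε n) * a + ε n * b) - a * log a))) :
    Tendsto (fun n => (ε n)⁻¹ *
      (((1 - ε n) * a + ε n * b) * log ((1 - ε n) * a + ε n * b) - a * log a))
      atTop (𝓝 ((log a + 1) * (b - a))) := by
  rcases ha.lt_or_eq with ha | rfl
  · exact ((hasDerivAt_mul_log ha.ne').tendsto_slope_along_segment b).comp
      (hε.mono_right (nhdsGT_le_nhdsNE 0))
  have hpos : ∀ᶠ n in atTop, 0 < ε n := hε.eventually self_mem_nhdsWithin
  have hslope : ∀ᶠ n in atTop, (ε n)⁻¹ *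
      (((1 - ε n) * 0 + ε n * b) * log ((1 - ε n) * 0 + ε n * b) - 0 * log 0) =
        b * log (ε n * b) := by
    filter_upwards [hpos] with n hn
    simp only [mul_zero, zero_add, zero_mul, sub_zero]
    rw [mul_assoc, inv_mul_cancel_left₀ hn.ne']
  -- at `a = 0` the slopes are `b log (ε b)`, which are unbounded below unless `b = 0`
  obtain rfl : b = 0 := by
    by_contra hb0
    have hbpos : 0 < b := hb.lt_of_ne' hb0
    have hεb : Tendsto (fun n => ε n * b) atTop (𝓝[>] 0) :=
      tendsto_nhdsWithin_iff.2 ⟨by simpa using (hε.mono_right nhdsWithin_le_nhds).mul_const b,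
        hpos.mono fun n hn => mul_pos hn hbpos⟩
    have hbot : Tendsto (fun n => b * log (ε n * b)) atTop atBot :=
      (tendsto_log_nhdsGT_zero.comp hεb).const_mul_atBot hbpos
    obtain ⟨m, hm⟩ := hbdd
    obtain ⟨n, hn, hlt⟩ := (hslope.and (hbot.eventually (eventually_lt_atBot m))).exists
    have hmn := hm ⟨n, rfl⟩
    dsimp only at hmn
    linarith
  simp

section MonotoneConvergence

variable {α : Type*} [MeasurableSpace α] {μ : Measure α} {q : ℕ → α → ℝ}

lemma lintegral_iSup_ofReal_sub_lt_top_of_antitone (hq : ∀ n, Integrable (q n) μ)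
    (hanti : ∀ x, Antitone fun n => q n x) {B : ℝ} (hB : ∀ᶠ n in atTop, B ≤ ∫ x, q n x ∂μ) :
    ∫⁻ x, ⨆ n, ENNReal.ofReal (q 0 x - q n x) ∂μ < ⊤ := by
  have hB' : ∀ n, B ≤ ∫ x, q n x ∂μ := fun n => by
    obtain ⟨m, hm, hnm⟩ := (hB.and (eventually_ge_atTop n)).exists
    exact hm.trans (integral_mono (hq m) (hq n) fun x => hanti x hnm)
  rw [lintegral_iSup' (f := fun n x => ENNReal.ofReal (q 0 x - q n x))
    (fun n => ((hq 0).sub (hq n)).aemeasurable.ennreal_ofReal)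
    (Eventually.of_forall fun x n m hnm =>
      ENNReal.ofReal_le_ofReal (sub_le_sub_left (hanti x hnm) _))]
  refine lt_of_le_of_lt (iSup_le fun n => ?_) (ENNReal.ofReal_lt_top (r := ∫ x, q 0 x ∂μ - B))
  rw [← ofReal_integral_eq_lintegral_ofReal (f := fun x => q 0 x - q n x) ((hq 0).sub (hq n))
    (Eventually.of_forall fun x => sub_nonneg.2 (hanti x (Nat.zero_le n))),
    integral_sub (hq 0) (hq n)]
  exact ENNReal.ofReal_le_ofReal (by linarith [hB' n])

lemma integrable_and_tendsto_integral_of_antitone {L : α → ℝ}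
    (hq : ∀ n, Integrable (q n) μ) (hanti : ∀ x, Antitone fun n => q n x) {B : ℝ}
    (hB : ∀ᶠ n in atTop, B ≤ ∫ x, q n x ∂μ)
    (hlim : ∀ x, BddBelow (range fun n => q n x) → Tendsto (fun n => q n x) atTop (𝓝 (L x))) :
    Integrable L μ ∧ Tendsto (fun n => ∫ x, q n x ∂μ) atTop (𝓝 (∫ x, L x ∂μ)) := by
  set W : α → ℝ≥0∞ := fun x => ⨆ n, ENNReal.ofReal (q 0 x - q n x)
  have hW : ∫⁻ x, W x ∂μ < ⊤ := lintegral_iSup_ofReal_sub_lt_top_of_antitone hq hanti hB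
  have hWle : ∀ x n, ENNReal.ofReal (q 0 x - q n x) ≤ W x := fun x n =>
    le_iSup (fun n => ENNReal.ofReal (q 0 x - q n x)) n
  have hWfin : ∀ᵐ x ∂μ, W x < ⊤ := ae_lt_top' (AEMeasurable.iSup fun n =>
      ((hq 0).sub (hq n)).aemeasurable.ennreal_ofReal) hW.ne
  have hL : ∀ᵐ x ∂μ, Tendsto (fun n => q n x) atTop (𝓝 (L x)) := by
    filter_upwards [hWfin] with x hx
    refine hlim x ⟨q 0 x - (W x).toReal, ?_⟩
    rintro _ ⟨n, rfl⟩
    have := (ENNReal.ofReal_le_iff_le_toReal hx.ne).1 (hWle x n)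
    dsimp only
    linarith
  have hgap : Integrable (fun x => q 0 x - L x) μ := by
    have hnonneg : ∀ᵐ x ∂μ, 0 ≤ q 0 x - L x := hL.mono fun x hx =>
      sub_nonneg.2 (le_of_tendsto' hx fun n => hanti x (Nat.zero_le n))
    refine ⟨(hq 0).1.sub (aestronglyMeasurable_of_tendsto_ae atTop (fun n => (hq n).1) hL),
      (hasFiniteIntegral_iff_ofReal hnonneg).2 ?_⟩
    refine lt_of_le_of_lt (lintegral_mono_ae (hL.mono fun x hx => ?_)) hW
    exact le_of_tendsto' ((ENNReal.continuous_ofReal.tendsto _).comp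
      (tendsto_const_nhds.sub hx)) (hWle x)
  have hLint : Integrable L μ := ((hq 0).sub hgap).congr (Eventually.of_forall fun x => by simp)
  exact ⟨hLint, integral_tendsto_of_tendsto_of_antitone hq hLint
    (Eventually.of_forall hanti) hL⟩

end MonotoneConvergence

lemma integrable_and_le_integral_of_le_slope_integral_mul_log {α : Type*} [MeasurableSpace α]
    {ν : Measure α} {f₀ f₁ : α → ℝ} (h₀ : 0 ≤ f₀) (h₁ : 0 ≤ f₁)
    (hint₀ : Integrable (fun x => f₀ x * log (f₀ x)) ν)
    (hint : ∀ ε ∈ Ioc (0 : ℝ) 1, Integrable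
      (fun x => ((1 - ε) * f₀ x + ε * f₁ x) * log ((1 - ε) * f₀ x + ε * f₁ x)) ν)
    {c : ℝ → ℝ} {C : ℝ} (hc : Tendsto c (𝓝[>] 0) (𝓝 C))
    (hle : ∀ᶠ ε in 𝓝[>] 0, c ε ≤ ε⁻¹ *
      (∫ x, ((1 - ε) * f₀ x + ε * f₁ x) * log ((1 - ε) * f₀ x + ε * f₁ x) ∂ν -
        ∫ x, f₀ x * log (f₀ x) ∂ν)) :
    Integrable (fun x => (log (f₀ x) + 1) * (f₁ x - f₀ x)) ν ∧
      C ≤ ∫ x, (log (f₀ x) + 1) * (f₁ x - f₀ x) ∂ν := by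
  set ε : ℕ → ℝ := fun n => 1 / (n + 1)
  have hεpos : ∀ n, 0 < ε n := fun n => Nat.one_div_pos_of_nat
  have hε1 : ∀ n, ε n ∈ Ioc (0 : ℝ) 1 := fun n =>
    ⟨hεpos n, div_le_one_of_le₀ (by simp) (by positivity)⟩
  have hεanti : Antitone ε := fun n m hnm =>
    one_div_le_one_div_of_le (by positivity) (by simpa using hnm)
  have hε : Tendsto ε atTop (𝓝[>] 0) := tendsto_nhdsWithin_iff.2
    ⟨tendsto_one_div_add_atTop_nhds_zero_nat, Eventually.of_forall hεpos⟩
  set q : ℕ → α → ℝ := fun n x => (ε n)⁻¹ * (((1 - ε n) * f₀ x + ε n * f₁ x) *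
    log ((1 - ε n) * f₀ x + ε n * f₁ x) - f₀ x * log (f₀ x))
  have hq : ∀ n, Integrable (q n) ν := fun n => ((hint _ (hε1 n)).sub hint₀).const_mul _
  have hanti : ∀ x, Antitone fun n => q n x := fun x n m hnm =>
    convexOn_mul_log.slope_mono_along_segment (h₀ x) (h₁ x) (hεpos m) (hεanti hnm) (hε1 n).2
  have hqint : ∀ n, ∫ x, q n x ∂ν = (ε n)⁻¹ *
      (∫ x, ((1 - ε n) * f₀ x + ε n * f₁ x) * log ((1 - ε n) * f₀ x + ε n * f₁ x) ∂ν -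
        ∫ x, f₀ x * log (f₀ x) ∂ν) := fun n => by
    rw [integral_const_mul, integral_sub (hint _ (hε1 n)) hint₀]
  have hcq : ∀ᶠ n in atTop, c (ε n) ≤ ∫ x, q n x ∂ν := by
    filter_upwards [hε.eventually hle] with n hn
    rw [hqint]; exact hn
  have hB : ∀ᶠ n in atTop, C - 1 ≤ ∫ x, q n x ∂ν := by
    filter_upwards [hcq, (hc.comp hε).eventually (eventually_ge_nhds (sub_one_lt C))]
      with n hn hCn
    exact hCn.trans hn
  obtain ⟨hLint, hLlim⟩ := integrable_and_tendsto_integral_of_antitone hq hanti hB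
    fun x => tendsto_slope_mul_log_of_bddBelow (h₀ x) (h₁ x) hε
  exact ⟨hLint, le_of_tendsto_of_tendsto (hc.comp hε) hLlim hcq⟩

section Mixture

variable {α : Type*} [MeasurableSpace α]

def mixture (μ₀ μ₁ : Measure α) (ε : ℝ) : Measure α :=
  ENNReal.ofReal (1 - ε) • μ₀ + ENNReal.ofReal ε • μ₁

instance (μ : Measure α) [IsFiniteMeasure μ] (a : ℝ) : IsFiniteMeasure (ENNReal.ofReal a • μ) :=
  ⟨by simp [ENNReal.mul_lt_top, measure_lt_top]⟩

instance (μ₀ μ₁ : Measure α) [IsFiniteMeasure μ₀] [IsFiniteMeasure μ₁] (ε : ℝ) :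
    IsFiniteMeasure (mixture μ₀ μ₁ ε) := by
  unfold mixture; infer_instance

lemma mixture_absolutelyContinuous {μ₀ μ₁ ν : Measure α} (h₀ : μ₀ ≪ ν) (h₁ : μ₁ ≪ ν) (ε : ℝ) :
    mixture μ₀ μ₁ ε ≪ ν :=
  (h₀.smul_left _).add_left (h₁.smul_left _)

lemma toReal_rnDeriv_mixture (μ₀ μ₁ ν : Measure α) [IsFiniteMeasure μ₀] [IsFiniteMeasure μ₁]
    [SigmaFinite ν] {ε : ℝ} (hε : ε ∈ Icc (0 : ℝ) 1) :
    (fun x => ((mixture μ₀ μ₁ ε).rnDeriv ν x).toReal) =ᵐ[ν]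
      fun x => (1 - ε) * (μ₀.rnDeriv ν x).toReal + ε * (μ₁.rnDeriv ν x).toReal := by
  have h₀ := Measure.rnDeriv_smul_left_of_ne_top' μ₀ ν (ENNReal.ofReal_ne_top (r := 1 - ε))
  have h₁ := Measure.rnDeriv_smul_left_of_ne_top' μ₁ ν (ENNReal.ofReal_ne_top (r := ε))
  filter_upwards [Measure.rnDeriv_add' (ENNReal.ofReal (1 - ε) • μ₀) (ENNReal.ofReal ε • μ₁) ν,
    h₀, h₁, μ₀.rnDeriv_lt_top ν, μ₁.rnDeriv_lt_top ν] with x hx hx₀ hx₁ hlt₀ hlt₁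
  simp only [mixture, hx, Pi.add_apply, hx₀, hx₁, Pi.smul_apply, smul_eq_mul]
  rw [ENNReal.toReal_add (by finiteness) (by finiteness), ENNReal.toReal_mul, ENNReal.toReal_mul,
    ENNReal.toReal_ofReal (sub_nonneg.2 hε.2), ENNReal.toReal_ofReal hε.1]

end Mixture

section Entropy

variable {α : Type*} [MeasurableSpace α] {ν μ₀ μ₁ : Measure α} [SigmaFinite ν]
  [IsProbabilityMeasure μ₀] [IsProbabilityMeasure μ₁]

lemma integrable_llr_and_integral_eq_of_integrable_deriv_mul_log (h₀ : μ₀ ≪ ν) (h₁ : μ₁ ≪ ν)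
    (hint₀ : Integrable (llr μ₀ ν) μ₀)
    (hL : Integrable (fun x => (log (μ₀.rnDeriv ν x).toReal + 1) *
      ((μ₁.rnDeriv ν x).toReal - (μ₀.rnDeriv ν x).toReal)) ν) :
    Integrable (llr μ₀ ν) μ₁ ∧
      ∫ x, (log (μ₀.rnDeriv ν x).toReal + 1) *
        ((μ₁.rnDeriv ν x).toReal - (μ₀.rnDeriv ν x).toReal) ∂ν =
      ∫ x, llr μ₀ ν x ∂μ₁ - ∫ x, llr μ₀ ν x ∂μ₀ := by
  set f₀ : α → ℝ := fun x => (μ₀.rnDeriv ν x).toReal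
  set f₁ : α → ℝ := fun x => (μ₁.rnDeriv ν x).toReal
  change Integrable (fun x => (log (f₀ x) + 1) * (f₁ x - f₀ x)) ν at hL
  change _ ∧ ∫ x, (log (f₀ x) + 1) * (f₁ x - f₀ x) ∂ν = _
  have hdiff : Integrable (fun x => f₁ x - f₀ x) ν :=
    Measure.integrable_toReal_rnDeriv.sub Measure.integrable_toReal_rnDeriv
  have hdiff0 : ∫ x, (f₁ x - f₀ x) ∂ν = 0 := by
    rw [integral_sub Measure.integrable_toReal_rnDeriv Measure.integrable_toReal_rnDeriv,
      Measure.integral_toReal_rnDeriv h₁, Measure.integral_toReal_rnDeriv h₀]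
    simp
  have hg₀ : Integrable (fun x => f₀ x * log (f₀ x)) ν :=
    (integrable_rnDeriv_mul_log_iff h₀).2 hint₀
  have hsplit : ∀ x, (log (f₀ x) + 1) * (f₁ x - f₀ x) =
      f₁ x • llr μ₀ ν x - f₀ x * log (f₀ x) + (f₁ x - f₀ x) := fun x => by
    rw [smul_eq_mul, llr]; ring
  have hg₁ : Integrable (fun x => f₁ x • llr μ₀ ν x) ν :=
    ((hL.sub hdiff).add hg₀).congr (Eventually.of_forall fun x => by
      simp only [Pi.add_apply, Pi.sub_apply, hsplit]; ring)
  refine ⟨(integrable_rnDeriv_smul_iff h₁).1 hg₁, ?_⟩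
  simp_rw [hsplit]
  have hg : Integrable (fun x => f₁ x • llr μ₀ ν x - f₀ x * log (f₀ x)) ν := hg₁.sub hg₀
  rw [integral_add hg hdiff, integral_sub hg₁ hg₀, hdiff0, add_zero,
    integral_rnDeriv_smul h₁, integral_rnDeriv_mul_log h₀]

lemma integrable_llr_and_le_of_le_slope_integral_llr (h₀ : μ₀ ≪ ν) (h₁ : μ₁ ≪ ν)
    (hint₀ : Integrable (llr μ₀ ν) μ₀)
    (hint : ∀ ε ∈ Ioc (0 : ℝ) 1, Integrable (llr (mixture μ₀ μ₁ ε) ν) (mixture μ₀ μ₁ ε))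
    {c : ℝ → ℝ} {C : ℝ} (hc : Tendsto c (𝓝[>] 0) (𝓝 C))
    (hle : ∀ᶠ ε in 𝓝[>] 0, c ε ≤ ε⁻¹ *
      (∫ x, llr (mixture μ₀ μ₁ ε) ν x ∂(mixture μ₀ μ₁ ε) - ∫ x, llr μ₀ ν x ∂μ₀)) :
    Integrable (llr μ₀ ν) μ₁ ∧ C ≤ ∫ x, llr μ₀ ν x ∂μ₁ - ∫ x, llr μ₀ ν x ∂μ₀ := by
  set f₀ : α → ℝ := fun x => (μ₀.rnDeriv ν x).toReal
  set f₁ : α → ℝ := fun x => (μ₁.rnDeriv ν x).toReal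
  have hmix : ∀ ε ∈ Ioc (0 : ℝ) 1,
      (fun x => ((mixture μ₀ μ₁ ε).rnDeriv ν x).toReal *
        log ((mixture μ₀ μ₁ ε).rnDeriv ν x).toReal) =ᵐ[ν]
      fun x => ((1 - ε) * f₀ x + ε * f₁ x) * log ((1 - ε) * f₀ x + ε * f₁ x) :=
    fun ε hε => (toReal_rnDeriv_mixture μ₀ μ₁ ν (Ioc_subset_Icc_self hε)).mono
      fun x hx => by dsimp only at hx ⊢; rw [hx]
  have hac : ∀ ε, mixture μ₀ μ₁ ε ≪ ν := mixture_absolutelyContinuous h₀ h₁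
  have hent : ∀ ε ∈ Ioc (0 : ℝ) 1, ∫ x, llr (mixture μ₀ μ₁ ε) ν x ∂(mixture μ₀ μ₁ ε) =
      ∫ x, ((1 - ε) * f₀ x + ε * f₁ x) * log ((1 - ε) * f₀ x + ε * f₁ x) ∂ν :=
    fun ε hε => by rw [← integral_rnDeriv_mul_log (hac ε), integral_congr_ae (hmix ε hε)]
  obtain ⟨hL, hCL⟩ := integrable_and_le_integral_of_le_slope_integral_mul_log
    (fun x => ENNReal.toReal_nonneg) (fun x => ENNReal.toReal_nonneg)
    ((integrable_rnDeriv_mul_log_iff h₀).2 hint₀)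
    (fun ε hε => ((integrable_rnDeriv_mul_log_iff (hac ε)).2 (hint ε hε)).congr (hmix ε hε))
    hc (by
      filter_upwards [hle, Ioc_mem_nhdsGT zero_lt_one] with ε hε hε1
      rwa [hent ε hε1, ← integral_rnDeriv_mul_log h₀] at hε)
  obtain ⟨hint₁, heq⟩ := integrable_llr_and_integral_eq_of_integrable_deriv_mul_log h₀ h₁ hint₀ hL
  exact ⟨hint₁, heq ▸ hCL⟩

end Entropy

lemma relEnt_lt_top_iff {E : Type*} [MeasurableSpace E] {μ ν : Measure E} :
    relEnt μ ν < ⊤ ↔ μ ≪ ν ∧ Integrable (llr μ ν) μ := by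
  unfold relEnt
  split_ifs with h
  · exact iff_of_true (EReal.coe_lt_top _) h
  · exact iff_of_false (lt_irrefl _) h

lemma relEnt_eq_integral_llr {E : Type*} [MeasurableSpace E] {μ ν : Measure E}
    (h : relEnt μ ν < ⊤) : relEnt μ ν = ∫ x, llr μ ν x ∂μ := by
  unfold relEnt
  exact if_pos (relEnt_lt_top_iff.1 h)

namespace Pphi

variable {E : Type*} [MeasurableSpace E] {φ : E → ℝ}

lemma comb_m (μ ν : Pphi E φ) {ε : ℝ} (hε : ε ∈ Icc (0 : ℝ) 1) :
    (μ.comb ν ε).m = mixture μ.m ν.m ε := by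
  rw [comb, dif_pos (⟨hε.1, hε.2⟩ : 0 ≤ ε ∧ ε ≤ 1)]
  rfl

lemma integral_comb {μ ν : Pphi E φ} {ε : ℝ} (hε : ε ∈ Icc (0 : ℝ) 1) {f : E → ℝ}
    (hμ : Integrable f μ.m) (hν : Integrable f ν.m) :
    ∫ x, f x ∂(μ.comb ν ε).m = (1 - ε) * ∫ x, f x ∂μ.m + ε * ∫ x, f x ∂ν.m := by
  rw [comb_m μ ν hε, mixture, integral_add_measure (hμ.smul_measure ENNReal.ofReal_ne_top)
      (hν.smul_measure ENNReal.ofReal_ne_top), integral_smul_measure, integral_smul_measure,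
    ENNReal.toReal_ofReal (sub_nonneg.2 hε.2), ENNReal.toReal_ofReal hε.1, smul_eq_mul,
    smul_eq_mul]

lemma integral_comb_eq_zero {μ ν : Pphi E φ} {ε : ℝ} (hε : ε ∈ Icc (0 : ℝ) 1) {f : E → ℝ}
    (hμ : Integrable f μ.m) (hν : Integrable f ν.m) (hμ0 : ∫ x, f x ∂μ.m = 0)
    (hν0 : ∫ x, f x ∂ν.m = 0) : ∫ x, f x ∂(μ.comb ν ε).m = 0 := by
  rw [integral_comb hε hμ hν, hμ0, hν0]
  ring

lemma integrable_comb_iff {μ ν : Pphi E φ} {ε : ℝ} (hε : ε ∈ Ioo (0 : ℝ) 1) {f : E → ℝ} :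
    Integrable f (μ.comb ν ε).m ↔ Integrable f μ.m ∧ Integrable f ν.m := by
  rw [comb_m μ ν (Ioo_subset_Icc_self hε), mixture, integrable_add_measure,
    integrable_smul_measure (by simpa using hε.2) ENNReal.ofReal_ne_top,
    integrable_smul_measure (by simpa using hε.1) ENNReal.ofReal_ne_top]

lemma integrable_and_le_integral_of_forall_comb {μ ν : Pphi E φ} {f : E → ℝ} {r : ℝ}
    (h : ∀ ε ∈ Ioc (0 : ℝ) 1, Integrable f (μ.comb ν ε).m ∧ r ≤ ∫ x, f x ∂(μ.comb ν ε).m) :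
    Integrable f μ.m ∧ r ≤ ∫ x, f x ∂μ.m := by
  obtain ⟨hμ, hν⟩ := (integrable_comb_iff (by norm_num : (2⁻¹ : ℝ) ∈ Ioo 0 1)).1
    (h 2⁻¹ (by norm_num)).1
  refine ⟨hμ, ?_⟩
  have hlim : Tendsto (fun ε => (1 - ε) * ∫ x, f x ∂μ.m + ε * ∫ x, f x ∂ν.m) (𝓝[>] 0)
      (𝓝 (∫ x, f x ∂μ.m)) := by
    have : Continuous fun ε : ℝ => (1 - ε) * ∫ x, f x ∂μ.m + ε * ∫ x, f x ∂ν.m := by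
      fun_prop
    simpa using this.continuousWithinAt.tendsto (x := 0) (s := Ioi 0)
  refine ge_of_tendsto hlim ?_
  filter_upwards [Ioc_mem_nhdsGT zero_lt_one] with ε hε
  rw [← integral_comb (Ioc_subset_Icc_self hε) hμ hν]
  exact (h ε hε).2

lemma integrable_phi (hφ : Measurable φ) (hφ0 : ∀ x, 0 ≤ φ x) (μ : Pphi E φ) :
    Integrable φ μ.m :=
  ⟨hφ.aestronglyMeasurable,
    (hasFiniteIntegral_iff_ofReal (Eventually.of_forall hφ0)).2 μ.finInt⟩

lemma integrable_of_abs_le (hφ : Measurable φ) (hφ0 : ∀ x, 0 ≤ φ x) (μ : Pphi E φ)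
    {f : E → ℝ} (hf : AEStronglyMeasurable f μ.m) {C : ℝ} (hb : ∀ x, |f x| ≤ C * (1 + φ x)) :
    Integrable f μ.m :=
  (((integrable_const 1).add (integrable_phi hφ hφ0 μ)).const_mul C).mono' hf
    (Eventually.of_forall hb)

lemma continuous_integral_of_abs_le {T : Type*} [TopologicalSpace T] [FirstCountableTopology T]
    (hφ : Measurable φ) (hφ0 : ∀ x, 0 ≤ φ x) (μ : Pphi E φ) {g : T → E → ℝ}
    (hg : ∀ t, AEStronglyMeasurable (g t) μ.m) (hgc : ∀ x, Continuous fun t => g t x) {C : ℝ}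
    (hb : ∀ t x, |g t x| ≤ C * (1 + φ x)) : Continuous fun t => ∫ x, g t x ∂μ.m :=
  continuous_of_dominated hg (fun t => Eventually.of_forall (hb t))
    (((integrable_const 1).add (integrable_phi hφ hφ0 μ)).const_mul C)
    (Eventually.of_forall hgc)

end Pphi

lemma eventually_forall_nonpos_of_uniform_slope {T : Type*} {ψ : T → ℝ → ℝ} {ψ₀ d : T → ℝ}
    {κ η : ℝ} (hκ : 0 < κ) (hη : 0 < η) (h₀ : ∀ t, ψ₀ t ≤ 0)
    (hlin : ∀ t, ψ₀ t + κ * d t ≤ -η)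
    (hslope : ∀ᶠ ε in 𝓝[>] 0, ∀ t, |ε⁻¹ * (ψ t ε - ψ₀ t) - d t| < η / (2 * κ)) :
    ∀ᶠ ε in 𝓝[>] 0, ∀ t, ψ t ε ≤ 0 := by
  filter_upwards [hslope, Ioc_mem_nhdsGT hκ] with ε hε ⟨hε0, hεκ⟩ t
  have hstep : ψ t ε - ψ₀ t < ε * (d t + η / (2 * κ)) := by
    have := (abs_lt.1 (hε t)).2
    rw [← inv_mul_lt_iff₀ hε0]
    linarith
  have hinterp : ψ₀ t + ε * d t ≤ -(ε / κ * η) := by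
    have hw : ε / κ ≤ 1 := (div_le_one hκ).2 hεκ
    calc ψ₀ t + ε * d t = (1 - ε / κ) * ψ₀ t + ε / κ * (ψ₀ t + κ * d t) := by
          field_simp; ring
      _ ≤ (1 - ε / κ) * 0 + ε / κ * -η := by
          gcongr
          · exact h₀ t
          · exact hlin t
      _ = -(ε / κ * η) := by ring
  have : ε * (η / (2 * κ)) = ε / κ * η / 2 := by field_simp
  nlinarith [div_pos hε0 hκ]

lemma Pphi.integrable_and_integral_llr_le_of_minimal_along_segment {E : Type*}
    [MeasurableSpace E] {φ : E → ℝ} {ν : Measure E} [SigmaFinite ν] {F : Pphi E φ → EReal}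
    (hFbot : ∀ μ, F μ ≠ ⊥) {D : Set (Pphi E φ)} (hD : ∀ μ ∈ D, relEnt μ.m ν < ⊤ ∧ F μ < ⊤)
    {μ μ' : Pphi E φ} {DF : E → ℝ} (hDF : HasLFDerivWithinAtE D F μ DF) (hμ : μ ∈ D)
    (hμ' : μ' ∈ D) (hseg : ∀ ε ∈ Ioc (0 : ℝ) 1, μ.comb μ' ε ∈ D)
    (hmin : ∀ᶠ ε in 𝓝[>] 0, relEnt μ.m ν + F μ ≤ relEnt (μ.comb μ' ε).m ν + F (μ.comb μ' ε)) :
    Integrable (fun x => llr μ.m ν x + DF x) μ'.m ∧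
      ∫ x, llr μ.m ν x ∂μ.m ≤ ∫ x, llr μ.m ν x + DF x ∂μ'.m := by
  have hcomb : ∀ ε ∈ Ioc (0 : ℝ) 1, (μ.comb μ' ε).m = mixture μ.m μ'.m ε :=
    fun ε hε => μ.comb_m μ' (Ioc_subset_Icc_self hε)
  obtain ⟨hac, hint⟩ := relEnt_lt_top_iff.1 (hD μ hμ).1
  obtain ⟨hint', hle⟩ := integrable_llr_and_le_of_le_slope_integral_llr hac
    (relEnt_lt_top_iff.1 (hD μ' hμ').1).1 hint
    (fun ε hε => hcomb ε hε ▸ (relEnt_lt_top_iff.1 (hD _ (hseg ε hε)).1).2)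
    (hDF.2.2.2 μ' hμ').neg (by
      filter_upwards [hmin, Ioc_mem_nhdsGT zero_lt_one] with ε hε hε1
      obtain ⟨hHε, hFε⟩ := hD _ (hseg ε hε1)
      rw [← hcomb ε hε1]
      rw [relEnt_eq_integral_llr (hD μ hμ).1, relEnt_eq_integral_llr hHε,
        ← EReal.coe_toReal (hD μ hμ).2.ne (hFbot μ), ← EReal.coe_toReal hFε.ne (hFbot _),
        ← EReal.coe_add, ← EReal.coe_add, EReal.coe_le_coe_iff] at hε
      rw [neg_le, ← mul_neg, neg_sub, ← sub_nonneg, ← mul_sub]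
      exact mul_nonneg (inv_nonneg.2 hε1.1.le) (by linarith))
  refine ⟨hint'.add (hDF.2.1 μ' hμ'), ?_⟩
  rw [integral_add hint' (hDF.2.1 μ' hμ')]
  linarith [hDF.2.2.1]

theorem stmt9_general {E : Type*} [MetricSpace E] [MeasurableSpace E] [BorelSpace E]
    (φ : E → ℝ) (hφc : Continuous φ) (hφ0 : ∀ x, 0 ≤ φ x)
    (ν : Measure E) [IsProbabilityMeasure ν]
    (F : Pphi E φ → EReal) (hFbot : ∀ μ, F μ ≠ ⊥)
    (I : Pphi E φ → EReal) (hI : I = fun μ => relEnt μ.m ν + F μ)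
    -- linear equality constraints
    (S : Type*) (ζ : S → E → ℝ) (hζc : ∀ s, Continuous (ζ s))
    (Cζ : S → ℝ) (hζb : ∀ s x, |ζ s x| ≤ Cζ s * (1 + φ x))
    -- nonlinear inequality constraints
    (T : Type*) [MetricSpace T] [CompactSpace T]
    (Ψ : T → Pphi E φ → ℝ)
    -- constraint sets and domain
    (DI : Set (Pphi E φ)) (hDI : DI = {μ | relEnt μ.m ν < ⊤ ∧ F μ < ⊤})
    (Aζ : Set (Pphi E φ)) (hAζ : Aζ = {μ | ∀ s, (∫ x, ζ s x ∂μ.m) = 0})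
    (AΨ : Set (Pphi E φ)) (hAΨ : AΨ = {μ | ∀ t, Ψ t μ ≤ 0})
    -- the minimiser
    (μbar : Pphi E φ) (hadm : μbar ∈ DI ∩ (Aζ ∩ AΨ))
    (hmin : ∀ μ ∈ DI ∩ (Aζ ∩ AΨ), I μbar ≤ I μ)
    -- (A4): convexity of the domain and differentiability of F at μbar
    (hDIconv : ∀ μ ∈ DI, ∀ μ' ∈ DI, ∀ ε ∈ Icc (0:ℝ) 1, μ.comb μ' ε ∈ DI)
    (DF : E → ℝ) (hDF : HasLFDerivWithinAtE DI F μbar DF)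
    -- (A5)-(i): continuity of t ↦ Ψ_t(μbar)
    (hΨtcont : Continuous fun t => Ψ t μbar)
    -- (A5)-(ii): differentiability of Ψ_t at μbar, uniformly in t
    (DΨ : T → E → ℝ) (hDΨmeas : ∀ t, Measurable (DΨ t))
    (hΨdiff : ∀ μ' : Pphi E φ, ∀ δ > (0:ℝ), ∀ᶠ ε in 𝓝[>] (0:ℝ), ∀ t,
      |ε⁻¹ * (Ψ t (μbar.comb μ' ε) - Ψ t μbar) -
        ((∫ x, DΨ t x ∂μ'.m) - ∫ x, DΨ t x ∂μbar.m)| < δ)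
    -- (A5)-(iii): continuity of t ↦ δΨ_t/δμ(μbar,x)
    (hDΨtcont : ∀ x : E, Continuous fun t => DΨ t x)
    -- (A5)-(iv): domination
    (DΨbd : ℝ) (hDΨbd : ∀ t x, |DΨ t x| ≤ DΨbd * (1 + φ x))
    -- (A5)-(v): constraint qualification
    (μtilde : Pphi E φ) (hμtilde : μtilde ∈ DI ∩ Aζ) (εt : ℝ) (hεt : 0 < εt)
    (hqual : ∀ t, Ψ t μbar +
      εt * ((∫ x, DΨ t x ∂μtilde.m) - ∫ x, DΨ t x ∂μbar.m) < 0) :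
    -- (1) integrability of log(dμbar/dν)
    (∀ μ ∈ DI ∩ Aζ,
      (∀ t, Ψ t μbar + εt * ((∫ x, DΨ t x ∂μ.m) - ∫ x, DΨ t x ∂μbar.m) ≤ 0) →
      Integrable (fun x => Real.log ((μbar.m.rnDeriv ν x).toReal)) μ.m) ∧
    -- (2) μbar minimises the linearised functional, with minimum value H(μbar|ν)
    ((((∫ x, (Real.log ((μbar.m.rnDeriv ν x).toReal) + DF x) ∂μbar.m : ℝ)) : EReal)
        = relEnt μbar.m ν ∧
      ∀ μ ∈ DI ∩ Aζ,
        (∀ t, Ψ t μbar + εt * ((∫ x, DΨ t x ∂μ.m) - ∫ x, DΨ t x ∂μbar.m) ≤ 0) →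
        relEnt μbar.m ν ≤
          (((∫ x, (Real.log ((μbar.m.rnDeriv ν x).toReal) + DF x) ∂μ.m : ℝ)) : EReal)) := by
  subst hDI hAζ hAΨ hI
  obtain ⟨hμbar, hbarζ, hbarΨ⟩ := hadm
  have hζint : ∀ s (μ : Pphi E φ), Integrable (ζ s) μ.m := fun s μ =>
    μ.integrable_of_abs_le hφc.measurable hφ0 (hζc s).aestronglyMeasurable (hζb s)
  have hDΨint : ∀ t (μ : Pphi E φ), Integrable (DΨ t) μ.m := fun t μ =>
    μ.integrable_of_abs_le hφc.measurable hφ0 (hDΨmeas t).aestronglyMeasurable (hDΨbd t)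
  have hζcomb : ∀ μ μ' : Pphi E φ, (∀ s, ∫ x, ζ s x ∂μ.m = 0) → (∀ s, ∫ x, ζ s x ∂μ'.m = 0) →
      ∀ ε ∈ Ioc (0 : ℝ) 1, ∀ s, ∫ x, ζ s x ∂(μ.comb μ' ε).m = 0 := fun μ μ' hμ hμ' ε hε s =>
    Pphi.integral_comb_eq_zero (Ioc_subset_Icc_self hε) (hζint s μ) (hζint s μ') (hμ s) (hμ' s)
  set Λ : Pphi E φ → T → ℝ := fun μ t =>
    Ψ t μbar + εt * ((∫ x, DΨ t x ∂μ.m) - ∫ x, DΨ t x ∂μbar.m)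
  have hstrict : ∀ μ : Pphi E φ, relEnt μ.m ν < ⊤ ∧ F μ < ⊤ → (∀ s, ∫ x, ζ s x ∂μ.m = 0) →
      (∃ η > 0, ∀ t, Λ μ t ≤ -η) →
      Integrable (fun x => llr μbar.m ν x + DF x) μ.m ∧
        ∫ x, llr μbar.m ν x ∂μbar.m ≤ ∫ x, llr μbar.m ν x + DF x ∂μ.m := by
    rintro μ hμ hμζ ⟨η, hη, hμη⟩
    have hseg := fun ε hε => hDIconv _ hμbar _ hμ ε (Ioc_subset_Icc_self hε)
    refine Pphi.integrable_and_integral_llr_le_of_minimal_along_segment hFbot (fun _ h => h) hDF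
      hμbar hμ hseg ?_
    filter_upwards [eventually_forall_nonpos_of_uniform_slope hεt hη hbarΨ hμη
      (hΨdiff μ _ (by positivity)), Ioc_mem_nhdsGT one_pos] with ε hfeas hε
    exact hmin _ ⟨hseg ε hε, hζcomb _ _ hbarζ hμζ ε hε, hfeas⟩
  obtain ⟨η₀, hη₀, hmargin⟩ := isCompact_univ.exists_forall_le'
    (f := fun t => -Λ μtilde t) (Continuous.continuousOn (by
      have := fun μ => Pphi.continuous_integral_of_abs_le hφc.measurable hφ0 μ
        (fun t => (hDΨmeas t).aestronglyMeasurable) hDΨtcont hDΨbd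
      fun_prop)) (fun t _ => neg_pos.2 (hqual t))
  have hmain : ∀ μ : Pphi E φ, relEnt μ.m ν < ⊤ ∧ F μ < ⊤ → (∀ s, ∫ x, ζ s x ∂μ.m = 0) →
      (∀ t, Λ μ t ≤ 0) →
      Integrable (fun x => llr μbar.m ν x + DF x) μ.m ∧
        ∫ x, llr μbar.m ν x ∂μbar.m ≤ ∫ x, llr μbar.m ν x + DF x ∂μ.m := by
    rintro μ hμ hμζ hΛ
    refine Pphi.integrable_and_le_integral_of_forall_comb fun ε hε => hstrict _
      (hDIconv _ hμ _ hμtilde.1 ε (Ioc_subset_Icc_self hε)) (hζcomb _ _ hμζ hμtilde.2 ε hε)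
      ⟨ε * η₀, mul_pos hε.1 hη₀, fun t => ?_⟩
    have hΛcomb : Λ (μ.comb μtilde ε) t = (1 - ε) * Λ μ t + ε * Λ μtilde t := by
      simp only [Λ, Pphi.integral_comb (Ioc_subset_Icc_self hε) (hDΨint t _) (hDΨint t _)]
      ring
    rw [hΛcomb]
    nlinarith [mul_nonpos_of_nonneg_of_nonpos (sub_nonneg.2 hε.2) (hΛ t),
      mul_le_mul_of_nonneg_left (hmargin t (mem_univ t)) hε.1.le]
  refine ⟨fun μ hμ hΛ => ?_, ?_, fun μ hμ hΛ => ?_⟩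
  · refine ((hmain μ hμ.1 hμ.2 hΛ).1.sub (hDF.2.1 μ hμ.1)).congr
      (Eventually.of_forall fun x => ?_)
    simp [llr]
  · change ((∫ x, llr μbar.m ν x + DF x ∂μbar.m : ℝ) : EReal) = _
    rw [relEnt_eq_integral_llr hμbar.1, integral_add (relEnt_lt_top_iff.1 hμbar.1).2 (hDF.2.1 μbar hμbar), hDF.2.2.1,
      add_zero]
  · rw [relEnt_eq_integral_llr hμbar.1]
    exact EReal.coe_le_coe_iff.2 (hmain μ hμ.1 hμ.2 hΛ).2

/-- linearisation: the minimiser `μbar` of `I` under the constraints is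
also a minimiser of the linearised problem, and `log(dμbar/dν)` is integrable against any
admissible measure satisfying the linearised inequality constraints. -/
theorem stmt9 {E : Type*} [MetricSpace E] [CompleteSpace E]
    [TopologicalSpace.SeparableSpace E] [MeasurableSpace E] [BorelSpace E]
    (φ : E → ℝ) (hφc : Continuous φ) (hφ0 : ∀ x, 0 ≤ φ x)
    (ν : Measure E) [IsProbabilityMeasure ν]
    (hexp : ∀ α : ℝ, 0 < α → ∫⁻ x, ENNReal.ofReal (Real.exp (α * φ x)) ∂ν < ⊤)
    (F : Pphi E φ → EReal) (hFbot : ∀ μ, F μ ≠ ⊥)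
    (I : Pphi E φ → EReal) (hI : I = fun μ => relEnt μ.m ν + F μ)
    (hIlsc : LowerSemicontinuous I)
    -- linear equality constraints
    (S : Type*) (ζ : S → E → ℝ) (hζc : ∀ s, Continuous (ζ s))
    (Cζ : S → ℝ) (hCζ : ∀ s, 0 ≤ Cζ s) (hζb : ∀ s x, |ζ s x| ≤ Cζ s * (1 + φ x))
    -- nonlinear inequality constraints
    (T : Type*) [MetricSpace T] [CompactSpace T] [MeasurableSpace T] [BorelSpace T]
    (Ψ : T → Pphi E φ → ℝ) (hΨlsc : ∀ t, LowerSemicontinuous (Ψ t))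
    -- constraint sets and domain
    (DI : Set (Pphi E φ)) (hDI : DI = {μ | relEnt μ.m ν < ⊤ ∧ F μ < ⊤})
    (Aζ : Set (Pphi E φ)) (hAζ : Aζ = {μ | ∀ s, (∫ x, ζ s x ∂μ.m) = 0})
    (AΨ : Set (Pphi E φ)) (hAΨ : AΨ = {μ | ∀ t, Ψ t μ ≤ 0})
    -- the minimiser
    (μbar : Pphi E φ) (hadm : μbar ∈ DI ∩ (Aζ ∩ AΨ))
    (hmin : ∀ μ ∈ DI ∩ (Aζ ∩ AΨ), I μbar ≤ I μ)
    -- (A4): convexity of the domain and differentiability of F at μbar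
    (hDIconv : ∀ μ ∈ DI, ∀ μ' ∈ DI, ∀ ε ∈ Icc (0:ℝ) 1, μ.comb μ' ε ∈ DI)
    (DF : E → ℝ) (hDF : HasLFDerivWithinAtE DI F μbar DF)
    -- (A5)-(i): continuity of t ↦ Ψ_t(μbar)
    (hΨtcont : Continuous fun t => Ψ t μbar)
    -- (A5)-(ii): differentiability of Ψ_t at μbar, uniformly in t
    (DΨ : T → E → ℝ) (hDΨmeas : ∀ t, Measurable (DΨ t))
    (hDΨint : ∀ t, ∀ μ' : Pphi E φ, Integrable (DΨ t) μ'.m)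
    (hDΨnorm : ∀ t, (∫ x, DΨ t x ∂μbar.m) = 0)
    (hΨdiff : ∀ μ' : Pphi E φ, ∀ δ > (0:ℝ), ∀ᶠ ε in 𝓝[>] (0:ℝ), ∀ t,
      |ε⁻¹ * (Ψ t (μbar.comb μ' ε) - Ψ t μbar) -
        ((∫ x, DΨ t x ∂μ'.m) - ∫ x, DΨ t x ∂μbar.m)| < δ)
    -- (A5)-(iii): continuity of t ↦ δΨ_t/δμ(μbar,x)
    (hDΨtcont : ∀ x : E, Continuous fun t => DΨ t x)
    -- (A5)-(iv): domination
    (DΨbd : ℝ) (hDΨbd0 : 0 ≤ DΨbd) (hDΨbd : ∀ t x, |DΨ t x| ≤ DΨbd * (1 + φ x))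
    -- (A5)-(v): constraint qualification
    (μtilde : Pphi E φ) (hμtilde : μtilde ∈ DI ∩ Aζ) (εt : ℝ) (hεt : 0 < εt)
    (hqual : ∀ t, Ψ t μbar +
      εt * ((∫ x, DΨ t x ∂μtilde.m) - ∫ x, DΨ t x ∂μbar.m) < 0) :
    -- (1) integrability of log(dμbar/dν)
    (∀ μ ∈ DI ∩ Aζ,
      (∀ t, Ψ t μbar + εt * ((∫ x, DΨ t x ∂μ.m) - ∫ x, DΨ t x ∂μbar.m) ≤ 0) →
      Integrable (fun x => Real.log ((μbar.m.rnDeriv ν x).toReal)) μ.m) ∧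
    -- (2) μbar minimises the linearised functional, with minimum value H(μbar|ν)
    ((((∫ x, (Real.log ((μbar.m.rnDeriv ν x).toReal) + DF x) ∂μbar.m : ℝ)) : EReal)
        = relEnt μbar.m ν ∧
      ∀ μ ∈ DI ∩ Aζ,
        (∀ t, Ψ t μbar + εt * ((∫ x, DΨ t x ∂μ.m) - ∫ x, DΨ t x ∂μbar.m) ≤ 0) →
        relEnt μbar.m ν ≤
          (((∫ x, (Real.log ((μbar.m.rnDeriv ν x).toReal) + DF x) ∂μ.m : ℝ)) : EReal)) :=
  stmt9_general φ hφc hφ0 ν F hFbot I hI S ζ hζc Cζ hζb T Ψ DI hDI Aζ hAζ AΨ hAΨ μbar hadm hmin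
    hDIconv DF hDF hΨtcont DΨ hDΨmeas hΨdiff hDΨtcont DΨbd hDΨbd μtilde hμtilde εt hεt hqual
end
end

section
/- Assume I := H(·|ν) + F is lower semi-continuous on P_φ(E), ∫ e^{αφ} dν < ∞ for all α > 0, (ζ_s)_{s∈S} are continuous with |ζ_s| ≤ C_s(1+φ), each Ψ_t is lower semi-continuous, and F and all Ψ_t are convex on P_φ(E). Let μ̄ ∈ D_I ∩ A^ζ_Ψ satisfy: (i) F and each Ψ_t are differentiable at μ̄ w.r.t. the directions D_I ∩ A^ζ_Ψ; (ii) (t,x) ↦ δΨ_t/δμ(μ̄,x) is measurable and sup_{t∈T} |δΨ_t/δμ(μ̄,x)| ≤ D^Ψ(1+φ(x)); (iii) there exist ζ̄ in the L¹(E,dμ̄)-closure of Span(ζ_s, s∈S), a positive Radon measure λ̄ on T, and a measurable S̄ ⊆ E with μ̄(S̄) = 1 such that Z̄ := ∫ 1_{S̄} exp[−δF/δμ(μ̄,·) − ζ̄ − ∫_T δΨ_t/δμ(μ̄,·) λ̄(dt)] dν ∈ (0,∞), dμ̄/dν = Z̄^{-1} 1_{S̄} exp[−δF/δμ(μ̄,·)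 − ζ̄ − ∫_T δΨ_t/δμ(μ̄,·) λ̄(dt)], and Ψ_t(μ̄) = 0 for λ̄-a.e. t; (iv) ν(S̄) = 1, and for every μ ∈ D_I ∩ A^ζ_Ψ, ζ̄ ∈ L¹(E,dμ) with ∫ ζ̄ dμ = 0. Then μ̄ is the unique minimiser of I over D_I ∩ A^ζ_Ψ. -/
open MeasureTheory Filter Topology Set
open scoped ENNReal NNReal

noncomputable section

/-! For admissible `μ`, the Gibbs inequality `H(μ|ν) ≥ ∫ log (dμ̄/dν) dμ` reads
`H(μ|ν) ≥ -log Z̄ - ⟨μ, δF/δμ(μ̄) + ∫ δΨ_t/δμ(μ̄) λ̄(dt)⟩` (the `ζ̄` term vanishes by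
orthogonality), with equality at `μ = μ̄` and only there. Convexity turns the linear functional
derivatives into supporting lines: `F(μ) - F(μ̄) ≥ ⟨μ - μ̄, δF/δμ(μ̄)⟩` and likewise for each
`Ψ_t`; since `Ψ_t(μ) ≤ 0 = Ψ_t(μ̄)` for `λ̄`-a.e. `t`, integrating against `λ̄` gives
`⟨μ - μ̄, ∫ δΨ_t/δμ(μ̄) λ̄(dt)⟩ ≤ 0`. Adding the three inequalities yields `I(μ̄) ≤ I(μ)`, and
equality forces equality in the Gibbs inequality, hence `μ = μ̄`. -/

lemma Pphi.ext_of_m {E : Type*} [MeasurableSpace E] {φ : E → ℝ} {μ μ' : Pphi E φ}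
    (h : μ.m = μ'.m) : μ = μ' := by
  cases μ; cases μ'
  congr 1
  exact Subtype.ext h

lemma Pphi.integrable_phi_s11 {E : Type*} [MeasurableSpace E] {φ : E → ℝ} (μ : Pphi E φ)
    (hφ : AEStronglyMeasurable φ μ.m) (hφ0 : ∀ x, 0 ≤ φ x) : Integrable φ μ.m :=
  ⟨hφ, (hasFiniteIntegral_iff_ofReal (ae_of_all _ hφ0)).2 μ.finInt⟩

lemma Pphi.integrable_uncurry_of_abs_le {E T : Type*} [MeasurableSpace E] [MeasurableSpace T]
    {φ : E → ℝ} (μ : Pphi E φ) (hφ : AEStronglyMeasurable φ μ.m) (hφ0 : ∀ x, 0 ≤ φ x)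
    (lam : Measure T) [IsFiniteMeasure lam] {G : T → E → ℝ}
    (hG : AEStronglyMeasurable (Function.uncurry G) (lam.prod μ.m)) (c : ℝ)
    (hbd : ∀ t x, |G t x| ≤ c * (1 + φ x)) : Integrable (Function.uncurry G) (lam.prod μ.m) :=
  ((((integrable_const 1).add (μ.integrable_phi_s11 hφ hφ0)).const_mul c).comp_snd lam).mono' hG
    (ae_of_all _ fun p => hbd p.1 p.2)

lemma le_sub_of_tendsto_slope_of_le_chord {G : ℝ → ℝ} {a b L : ℝ}
    (hchord : ∀ ε ∈ Ioc (0:ℝ) 1, G ε ≤ (1 - ε) * a + ε * b)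
    (hG : Tendsto (fun ε => ε⁻¹ * (G ε - a)) (𝓝[>] 0) (𝓝 L)) : L ≤ b - a := by
  refine le_of_tendsto hG ?_
  filter_upwards [Ioc_mem_nhdsGT (zero_lt_one' ℝ)] with ε hε
  rw [inv_mul_le_iff₀ hε.1]
  linarith [hchord ε hε]

section Convex

variable {E : Type*} [MeasurableSpace E] {φ : E → ℝ} {C : Set (Pphi E φ)} {μ μ' : Pphi E φ}
  {g : E → ℝ}

lemma HasLFDerivWithinAt.integral_sub_le {G : Pphi E φ → ℝ} (hG : HasLFDerivWithinAt C G μ g)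
    (hμ' : μ' ∈ C)
    (hconv : ∀ ε ∈ Icc (0:ℝ) 1, G (μ.comb μ' ε) ≤ (1 - ε) * G μ + ε * G μ') :
    ∫ x, g x ∂μ'.m - ∫ x, g x ∂μ.m ≤ G μ' - G μ :=
  le_sub_of_tendsto_slope_of_le_chord (fun ε hε => hconv ε (Ioc_subset_Icc_self hε))
    (hG.2.2.2 μ' hμ')

lemma HasLFDerivWithinAtE.integral_sub_le {G : Pphi E φ → EReal}
    (hG : HasLFDerivWithinAtE C G μ g) (hμ' : μ' ∈ C) (hbot : ∀ μ, G μ ≠ ⊥) (hμ : G μ ≠ ⊤)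
    (hμ'top : G μ' ≠ ⊤)
    (hconv : ∀ ε ∈ Icc (0:ℝ) 1,
      G (μ.comb μ' ε) ≤ ((1 - ε : ℝ) : EReal) * G μ + ((ε : ℝ) : EReal) * G μ') :
    ∫ x, g x ∂μ'.m - ∫ x, g x ∂μ.m ≤ (G μ').toReal - (G μ).toReal := by
  refine le_sub_of_tendsto_slope_of_le_chord (fun ε hε => ?_) (hG.2.2.2 μ' hμ')
  have h := hconv ε (Ioc_subset_Icc_self hε)
  rw [← EReal.coe_toReal hμ (hbot μ), ← EReal.coe_toReal hμ'top (hbot μ'), ← EReal.coe_mul,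
    ← EReal.coe_mul, ← EReal.coe_add] at h
  exact (EReal.toReal_le_toReal h (hbot _) (EReal.coe_ne_top _)).trans_eq (EReal.toReal_coe _)

variable {T : Type*} [MeasurableSpace T] {lam : Measure T} [IsFiniteMeasure lam]
  {Ψ : T → Pphi E φ → ℝ} {DΨ : T → E → ℝ}

lemma integral_integral_le_of_complementary_slackness
    (hdiff : ∀ t, HasLFDerivWithinAt C (Ψ t) μ (DΨ t))
    (hconv : ∀ t, ∀ μ μ' : Pphi E φ, ∀ ε ∈ Icc (0:ℝ) 1,
      Ψ t (μ.comb μ' ε) ≤ (1 - ε) * Ψ t μ + ε * Ψ t μ')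
    (hμ' : μ' ∈ C) (hΨμ' : ∀ t, Ψ t μ' ≤ 0) (hslack : ∀ᵐ t ∂lam, Ψ t μ = 0)
    (hint : Integrable (Function.uncurry DΨ) (lam.prod μ.m))
    (hint' : Integrable (Function.uncurry DΨ) (lam.prod μ'.m)) :
    ∫ x, ∫ t, DΨ t x ∂lam ∂μ'.m ≤ ∫ x, ∫ t, DΨ t x ∂lam ∂μ.m := by
  rw [← integral_integral_swap hint, ← integral_integral_swap hint']
  refine integral_mono_ae hint'.integral_prod_left hint.integral_prod_left ?_
  filter_upwards [hslack] with t ht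
  linarith [(hdiff t).integral_sub_le hμ' (hconv t μ μ' · ·), hΨμ' t]

end Convex

section Gibbs

variable {E : Type*} [MeasurableSpace E]

lemma integral_log_nonpos_of_integral_le_one {μ : Measure E} [IsProbabilityMeasure μ]
    {r : E → ℝ} (hr_pos : ∀ᵐ x ∂μ, 0 < r x) (hr : Integrable r μ) (hr_le : ∫ x, r x ∂μ ≤ 1)
    (hlog : Integrable (fun x => Real.log (r x)) μ) :
    ∫ x, Real.log (r x) ∂μ ≤ 0 ∧ (∫ x, Real.log (r x) ∂μ = 0 → r =ᵐ[μ] 1) := by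
  have hr_sub : Integrable (fun x => r x - 1) μ := hr.sub (integrable_const 1)
  have hgap : 0 ≤ᵐ[μ] fun x => r x - 1 - Real.log (r x) := by
    filter_upwards [hr_pos] with x hx
    exact sub_nonneg.2 (Real.log_le_sub_one_of_pos hx)
  have hgap_int : Integrable (fun x => r x - 1 - Real.log (r x)) μ := hr_sub.sub hlog
  have hgap_eq : ∫ x, (r x - 1 - Real.log (r x)) ∂μ =
      ∫ x, r x ∂μ - 1 - ∫ x, Real.log (r x) ∂μ := by
    rw [integral_sub hr_sub hlog, integral_sub hr (integrable_const 1),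
      integral_const, probReal_univ, one_smul]
  have hgap_nonneg := integral_nonneg_of_ae hgap
  refine ⟨by linarith, fun h0 => ?_⟩
  have hgap_zero := (integral_eq_zero_iff_of_nonneg_ae hgap hgap_int).1 (by linarith)
  filter_upwards [hgap_zero, hr_pos] with x hx hx_pos
  by_contra hne
  have := Real.log_lt_sub_one_of_pos hx_pos hne
  simp only [Pi.zero_apply] at hx
  linarith

variable {μ μ₀ ν : Measure E}

lemma eq_withDensity_of_rnDeriv_ae_eq [SigmaFinite ν] [IsProbabilityMeasure μ]
    [IsProbabilityMeasure μ₀] {f : E → ℝ≥0∞} (hμ₀ : μ₀ = ν.withDensity f) (hac : μ ≪ ν)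
    (h : μ.rnDeriv ν =ᵐ[μ] f) : μ = μ₀ := by
  refine Measure.eq_of_le_of_isProbabilityMeasure ?_
  calc μ = ν.withDensity (μ.rnDeriv ν) := (Measure.withDensity_rnDeriv_eq μ ν hac).symm
    _ ≤ ν.withDensity f := by
      refine withDensity_mono ?_
      filter_upwards [Measure.ae_rnDeriv_ne_zero_imp_of_ae ν h] with x hx
      by_cases h0 : μ.rnDeriv ν x = 0
      · simp [h0]
      · exact (hx h0).le
    _ = μ₀ := hμ₀.symm

lemma rnDeriv_ae_eq_of_eq_withDensity [SigmaFinite ν] {f g : E → ℝ≥0∞}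
    (hμ₀ : μ₀ = ν.withDensity f) (hg : Measurable g) (hfg : f =ᵐ[μ₀] g) :
    μ₀.rnDeriv ν =ᵐ[μ₀] g := by
  -- `f` need not be measurable: off a `μ₀`-null set it agrees with the measurable `g`.
  obtain ⟨N, hsub, hN, hN0⟩ := exists_measurable_superset_of_null (ae_iff.1 hfg)
  have hμ₀' : μ₀ = ν.withDensity (Nᶜ.indicator g) := by
    calc μ₀ = μ₀.restrict Nᶜ :=
          (Measure.restrict_eq_self_of_ae_mem (measure_eq_zero_iff_ae_notMem.1 hN0)).symm
      _ = (ν.restrict Nᶜ).withDensity f := by rw [hμ₀, restrict_withDensity hN.compl]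
      _ = (ν.restrict Nᶜ).withDensity g := by
          refine withDensity_congr_ae ((ae_restrict_iff' hN.compl).2 (ae_of_all _ fun x hx => ?_))
          by_contra hne
          exact hx (hsub hne)
      _ = ν.withDensity (Nᶜ.indicator g) := (withDensity_indicator hN.compl g).symm
  have hac : μ₀ ≪ ν := hμ₀ ▸ withDensity_absolutelyContinuous ν f
  have hrn : μ₀.rnDeriv ν =ᵐ[ν] Nᶜ.indicator g := by
    rw [hμ₀']
    exact Measure.rnDeriv_withDensity ν (hg.indicator hN.compl)
  filter_upwards [hac.ae_le hrn, measure_eq_zero_iff_ae_notMem.1 hN0] with x hx hxN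
  rw [hx, indicator_of_mem hxN]

lemma lintegral_ofReal_div_rnDeriv_le_one [SigmaFinite ν] [SigmaFinite μ]
    [IsProbabilityMeasure μ₀] {f : E → ℝ≥0∞} (hμ₀ : μ₀ = ν.withDensity f) (hac : μ ≪ ν)
    {q : E → ℝ} (hq : Measurable q) (hfq : f =ᵐ[μ] fun x => ENNReal.ofReal (q x)) :
    ∫⁻ x, ENNReal.ofReal (q x / (μ.rnDeriv ν x).toReal) ∂μ ≤ 1 := by
  calc ∫⁻ x, ENNReal.ofReal (q x / (μ.rnDeriv ν x).toReal) ∂μ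
      = ∫⁻ x, μ.rnDeriv ν x * ENNReal.ofReal (q x / (μ.rnDeriv ν x).toReal) ∂ν :=
        (lintegral_rnDeriv_mul hac
          (hq.div (Measure.measurable_rnDeriv μ ν).ennreal_toReal).ennreal_ofReal.aemeasurable).symm
    _ ≤ ∫⁻ x, f x ∂ν := by
        refine lintegral_mono_ae ?_
        filter_upwards [Measure.ae_rnDeriv_ne_zero_imp_of_ae ν hfq,
          Measure.rnDeriv_lt_top μ ν] with x hfx hρx
        by_cases h0 : μ.rnDeriv ν x = 0
        · simp [h0]
        · rw [hfx h0, ← ENNReal.ofReal_toReal hρx.ne, ← ENNReal.ofReal_mul ENNReal.toReal_nonneg,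
            ENNReal.toReal_ofReal ENNReal.toReal_nonneg,
            mul_div_cancel₀ _ (ENNReal.toReal_pos h0 hρx.ne).ne']
    _ = μ₀ univ := by rw [hμ₀, withDensity_apply _ MeasurableSet.univ, setLIntegral_univ]
    _ = 1 := measure_univ

lemma log_inv_mul_exp {c : ℝ} (hc : 0 < c) (a : ℝ) :
    Real.log (c⁻¹ * Real.exp a) = a - Real.log c := by
  rw [Real.log_mul (inv_pos.2 hc).ne' (Real.exp_pos a).ne', Real.log_inv, Real.log_exp]
  ring

theorem integral_log_le_integral_log_rnDeriv [SigmaFinite ν] [IsProbabilityMeasure μ]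
    [IsProbabilityMeasure μ₀] {f : E → ℝ≥0∞} (hμ₀ : μ₀ = ν.withDensity f) (hac : μ ≪ ν)
    {q : E → ℝ} (hq : Measurable q) (hq_pos : ∀ x, 0 < q x)
    (hfq : f =ᵐ[μ] fun x => ENNReal.ofReal (q x)) (hlogq : Integrable (fun x => Real.log (q x)) μ)
    (hlogρ : Integrable (fun x => Real.log (μ.rnDeriv ν x).toReal) μ) :
    ∫ x, Real.log (q x) ∂μ ≤ ∫ x, Real.log (μ.rnDeriv ν x).toReal ∂μ ∧
      (∫ x, Real.log (q x) ∂μ = ∫ x, Real.log (μ.rnDeriv ν x).toReal ∂μ → μ = μ₀) := by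
  set r : E → ℝ := fun x => q x / (μ.rnDeriv ν x).toReal
  have hρ_pos : ∀ᵐ x ∂μ, 0 < (μ.rnDeriv ν x).toReal := by
    filter_upwards [Measure.rnDeriv_pos hac, hac.ae_le (Measure.rnDeriv_lt_top μ ν)] with x h0 htop
    exact ENNReal.toReal_pos h0.ne' htop.ne
  have hr_meas : Measurable r := hq.div (Measure.measurable_rnDeriv μ ν).ennreal_toReal
  have hr_nonneg : ∀ x, 0 ≤ r x := fun x => div_nonneg (hq_pos x).le ENNReal.toReal_nonneg
  have hr_lint := lintegral_ofReal_div_rnDeriv_le_one hμ₀ hac hq hfq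
  have hr_int : Integrable r μ :=
    ⟨hr_meas.aestronglyMeasurable, (hasFiniteIntegral_iff_ofReal (ae_of_all _ hr_nonneg)).2
      (hr_lint.trans_lt ENNReal.one_lt_top)⟩
  have hr_le : ∫ x, r x ∂μ ≤ 1 := by
    rw [integral_eq_lintegral_of_nonneg_ae (ae_of_all _ hr_nonneg) hr_meas.aestronglyMeasurable]
    exact ENNReal.toReal_le_of_le_ofReal zero_le_one (by rwa [ENNReal.ofReal_one])
  have hlog_r : (fun x => Real.log (r x)) =ᵐ[μ]
      fun x => Real.log (q x) - Real.log (μ.rnDeriv ν x).toReal := by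
    filter_upwards [hρ_pos] with x hx
    exact Real.log_div (hq_pos x).ne' hx.ne'
  obtain ⟨hle, heq⟩ := integral_log_nonpos_of_integral_le_one
    (hρ_pos.mono fun x hx => div_pos (hq_pos x) hx) hr_int hr_le
    ((hlogq.sub hlogρ).congr hlog_r.symm)
  rw [integral_congr_ae hlog_r, integral_sub hlogq hlogρ] at hle heq
  refine ⟨by linarith, fun h => eq_withDensity_of_rnDeriv_ae_eq hμ₀ hac ?_⟩
  filter_upwards [heq (by linarith), hfq, hρ_pos, hac.ae_le (Measure.rnDeriv_lt_top μ ν)]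
    with x hr1 hfx hρx hρtop
  rw [hfx, ← ENNReal.ofReal_toReal hρtop.ne, ← (div_eq_one_iff_eq hρx.ne').1 hr1]

/-- The potential `u` is not assumed measurable. -/
def gibbsDensity (S : Set E) (Z : ℝ≥0∞) (u : E → ℝ) : E → ℝ≥0∞ :=
  S.indicator fun y => Z⁻¹ * ENNReal.ofReal (Real.exp (u y))

variable {S : Set E} {Z : ℝ≥0∞} {u : E → ℝ}

lemma gibbsDensity_ae_eq (hZ0 : Z ≠ 0) (hZ : Z ≠ ⊤) (hS : ∀ᵐ x ∂ν, x ∈ S) (hac : μ ≪ ν)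
    {u' : E → ℝ} (hu : u =ᵐ[μ] u') :
    gibbsDensity S Z u =ᵐ[μ] fun x => ENNReal.ofReal (Z.toReal⁻¹ * Real.exp (u' x)) := by
  filter_upwards [hac.ae_le hS, hu] with x hxS hx
  rw [gibbsDensity, indicator_of_mem hxS, hx, ENNReal.ofReal_mul (by positivity),
    ENNReal.ofReal_inv_of_pos (ENNReal.toReal_pos hZ0 hZ), ENNReal.ofReal_toReal hZ]

theorem integral_sub_log_le_integral_log_rnDeriv [SigmaFinite ν] [IsProbabilityMeasure μ]
    [IsProbabilityMeasure μ₀] (hZ0 : Z ≠ 0) (hZ : Z ≠ ⊤) (hS : ∀ᵐ x ∂ν, x ∈ S)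
    (hμ₀ : μ₀ = ν.withDensity (gibbsDensity S Z u)) (hac : μ ≪ ν) (hu : Integrable u μ)
    (hlogρ : Integrable (fun x => Real.log (μ.rnDeriv ν x).toReal) μ) :
    ∫ x, u x ∂μ - Real.log Z.toReal ≤ ∫ x, Real.log (μ.rnDeriv ν x).toReal ∂μ ∧
      (∫ x, u x ∂μ - Real.log Z.toReal = ∫ x, Real.log (μ.rnDeriv ν x).toReal ∂μ → μ = μ₀) := by
  have hZ_pos := ENNReal.toReal_pos hZ0 hZ
  obtain ⟨u', hu'_meas, hu'⟩ := hu.1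
  have hlogq : ∫ x, Real.log (Z.toReal⁻¹ * Real.exp (u' x)) ∂μ =
      ∫ x, u x ∂μ - Real.log Z.toReal := by
    simp_rw [log_inv_mul_exp hZ_pos]
    rw [integral_sub (hu.congr hu') (integrable_const _), integral_const, probReal_univ, one_smul,
      integral_congr_ae hu']
  rw [← hlogq]
  refine integral_log_le_integral_log_rnDeriv hμ₀ hac (hu'_meas.measurable.exp.const_mul _)
    (fun x => mul_pos (inv_pos.2 hZ_pos) (Real.exp_pos _)) (gibbsDensity_ae_eq hZ0 hZ hS hac hu')
    ?_ hlogρ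
  simp_rw [log_inv_mul_exp hZ_pos]
  exact (hu.congr hu').sub (integrable_const _)

theorem integral_log_rnDeriv_gibbs [SigmaFinite ν] [IsProbabilityMeasure μ₀]
    (hZ0 : Z ≠ 0) (hZ : Z ≠ ⊤) (hS : ∀ᵐ x ∂ν, x ∈ S)
    (hμ₀ : μ₀ = ν.withDensity (gibbsDensity S Z u)) (hu : Integrable u μ₀) :
    ∫ x, Real.log (μ₀.rnDeriv ν x).toReal ∂μ₀ = ∫ x, u x ∂μ₀ - Real.log Z.toReal := by
  have hZ_pos := ENNReal.toReal_pos hZ0 hZ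
  obtain ⟨u', hu'_meas, hu'⟩ := hu.1
  have hac : μ₀ ≪ ν := hμ₀ ▸ withDensity_absolutelyContinuous ν _
  have hρ := rnDeriv_ae_eq_of_eq_withDensity hμ₀
    (hu'_meas.measurable.exp.const_mul _).ennreal_ofReal (gibbsDensity_ae_eq hZ0 hZ hS hac hu')
  calc ∫ x, Real.log (μ₀.rnDeriv ν x).toReal ∂μ₀ = ∫ x, (u' x - Real.log Z.toReal) ∂μ₀ := by
        refine integral_congr_ae ?_
        filter_upwards [hρ] with x hx
        rw [hx, ENNReal.toReal_ofReal (by positivity), log_inv_mul_exp hZ_pos]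
    _ = ∫ x, u x ∂μ₀ - Real.log Z.toReal := by
        rw [integral_sub (hu.congr hu') (integrable_const _), integral_const, probReal_univ,
          one_smul, integral_congr_ae hu']

end Gibbs

section RelEnt

variable {E : Type*} [MeasurableSpace E] {μ ν : Measure E}

lemma relEnt_lt_top_iff_s11 : relEnt μ ν < ⊤ ↔
    μ ≪ ν ∧ Integrable (fun x => Real.log (μ.rnDeriv ν x).toReal) μ := by
  unfold relEnt
  split_ifs with h <;> simp [h]

lemma relEnt_add_eq_coe (h : relEnt μ ν < ⊤) {a : EReal} (ha : a ≠ ⊤) (ha' : a ≠ ⊥) :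
    relEnt μ ν + a = ((∫ x, Real.log (μ.rnDeriv ν x).toReal ∂μ + a.toReal : ℝ) : EReal) := by
  rw [relEnt, if_pos (relEnt_lt_top_iff_s11.1 h), EReal.coe_add, EReal.coe_toReal ha ha']

end RelEnt

theorem stmt11_general {E : Type*} [MetricSpace E] [MeasurableSpace E] [BorelSpace E]
    (φ : E → ℝ) (hφc : Continuous φ) (hφ0 : ∀ x, 0 ≤ φ x)
    (ν : Measure E) [IsProbabilityMeasure ν]
    (F : Pphi E φ → EReal) (hFbot : ∀ μ, F μ ≠ ⊥)
    (I : Pphi E φ → EReal) (hI : I = fun μ => relEnt μ.m ν + F μ)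
    (T : Type*) [MeasurableSpace T] (Ψ : T → Pphi E φ → ℝ)
    -- (A7): convexity
    (hFconv : ∀ μ μ' : Pphi E φ, ∀ ε ∈ Icc (0:ℝ) 1,
      F (μ.comb μ' ε) ≤ ((1 - ε : ℝ) : EReal) * F μ + ((ε : ℝ) : EReal) * F μ')
    (hΨconv : ∀ t, ∀ μ μ' : Pphi E φ, ∀ ε ∈ Icc (0:ℝ) 1,
      Ψ t (μ.comb μ' ε) ≤ (1 - ε) * Ψ t μ + ε * Ψ t μ')
    -- constraint sets and domain
    (DI : Set (Pphi E φ)) (hDI : DI = {μ | relEnt μ.m ν < ⊤ ∧ F μ < ⊤})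
    (Aζ : Set (Pphi E φ))
    (AΨ : Set (Pphi E φ)) (hAΨ : AΨ = {μ | ∀ t, Ψ t μ ≤ 0})
    -- the candidate measure
    (μbar : Pphi E φ) (hadm : μbar ∈ DI ∩ (Aζ ∩ AΨ))
    -- (i): differentiability w.r.t. the directions D_I ∩ A^ζ_Ψ
    (DF : E → ℝ) (hDF : HasLFDerivWithinAtE (DI ∩ (Aζ ∩ AΨ)) F μbar DF)
    (DΨ : T → E → ℝ)
    (hDΨdiff : ∀ t, HasLFDerivWithinAt (DI ∩ (Aζ ∩ AΨ)) (Ψ t) μbar (DΨ t))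
    -- (ii): measurability and domination of the derivatives
    (hDΨmeas : Measurable (Function.uncurry DΨ))
    (DΨbd : ℝ) (hDΨbd : ∀ t x, |DΨ t x| ≤ DΨbd * (1 + φ x))
    -- (iii): the Gibbs data
    (ζbar : E → ℝ)
    (lam : Measure T) (hlamfin : IsFiniteMeasure lam)
    (Sbar : Set E) (hSbarmeas : MeasurableSet Sbar)
    (hZpos : 0 < ∫⁻ x in Sbar,
      ENNReal.ofReal (Real.exp (-DF x - ζbar x - ∫ t, DΨ t x ∂lam)) ∂ν)
    (hZfin : (∫⁻ x in Sbar,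
      ENNReal.ofReal (Real.exp (-DF x - ζbar x - ∫ t, DΨ t x ∂lam)) ∂ν) < ⊤)
    (hGibbs : μbar.m = ν.withDensity (fun x => Sbar.indicator (fun y =>
      (∫⁻ x' in Sbar,
        ENNReal.ofReal (Real.exp (-DF x' - ζbar x' - ∫ t, DΨ t x' ∂lam)) ∂ν)⁻¹ *
        ENNReal.ofReal (Real.exp (-DF y - ζbar y - ∫ t, DΨ t y ∂lam))) x))
    (hslack : ∀ᵐ t ∂lam, Ψ t μbar = 0)
    -- (iv): support and orthogonality conditions
    (hνSbar : ν Sbar = 1)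
    (hζbarorth : ∀ μ ∈ DI ∩ (Aζ ∩ AΨ), Integrable ζbar μ.m ∧ (∫ x, ζbar x ∂μ.m) = 0) :
    (∀ μ ∈ DI ∩ (Aζ ∩ AΨ), I μbar ≤ I μ) ∧
    (∀ μ ∈ DI ∩ (Aζ ∩ AΨ), I μ = I μbar → μ = μbar) := by
  subst hI hDI hAΨ
  set C := {μ : Pphi E φ | relEnt μ.m ν < ⊤ ∧ F μ < ⊤} ∩ (Aζ ∩ {μ | ∀ t, Ψ t μ ≤ 0})
  set g : E → ℝ := fun x => ∫ t, DΨ t x ∂lam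
  set u : E → ℝ := fun y => -DF y - ζbar y - g y
  have hS : ∀ᵐ x ∂ν, x ∈ Sbar :=
    (ae_mem_iff_measure_eq hSbarmeas.nullMeasurableSet).2 (by rw [hνSbar, measure_univ])
  have hDΨint (μ : Pphi E φ) : Integrable (Function.uncurry DΨ) (lam.prod μ.m) :=
    μ.integrable_uncurry_of_abs_le hφc.aestronglyMeasurable hφ0 lam
      hDΨmeas.aestronglyMeasurable DΨbd hDΨbd
  have hu {μ} (hμ : μ ∈ C) :
      Integrable u μ.m ∧ ∫ x, u x ∂μ.m = -∫ x, DF x ∂μ.m - ∫ x, g x ∂μ.m := by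
    have hDF_int := hDF.2.1 μ hμ
    obtain ⟨hζ_int, hζ0⟩ := hζbarorth μ hμ
    have hg_int : Integrable g μ.m := (hDΨint μ).integral_prod_right
    refine ⟨(hDF_int.neg.sub hζ_int).sub hg_int, ?_⟩
    simp only [u]
    rw [integral_sub ?_ hg_int, integral_sub ?_ hζ_int, integral_neg, hζ0, sub_zero]
    exacts [hDF_int.neg, hDF_int.neg.sub hζ_int]
  have hI_eq {μ} (hμ : μ ∈ C) := relEnt_add_eq_coe hμ.1.1 hμ.1.2.ne (hFbot μ)
  have hgibbs {μ} (hμ : μ ∈ C) := integral_sub_log_le_integral_log_rnDeriv hZpos.ne' hZfin.ne hS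
    hGibbs (relEnt_lt_top_iff_s11.1 hμ.1.1).1 (hu hμ).1 (relEnt_lt_top_iff_s11.1 hμ.1.1).2
  have hbar := integral_log_rnDeriv_gibbs hZpos.ne' hZfin.ne hS hGibbs (hu hadm).1
  have hF {μ} (hμ : μ ∈ C) := hDF.integral_sub_le hμ hFbot hadm.1.2.ne hμ.1.2.ne (hFconv μbar μ)
  have hg {μ} (hμ : μ ∈ C) := integral_integral_le_of_complementary_slackness hDΨdiff hΨconv hμ
    hμ.2.2 hslack (hDΨint μbar) (hDΨint μ)
  refine ⟨fun μ hμ => ?_, fun μ hμ hIμ => ?_⟩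
  · beta_reduce
    rw [hI_eq hadm, hI_eq hμ, EReal.coe_le_coe_iff]
    linarith [(hgibbs hμ).1, (hu hμ).2, (hu hadm).2, hbar, hF hμ, hg hμ]
  · beta_reduce at hIμ
    rw [hI_eq hadm, hI_eq hμ, EReal.coe_eq_coe_iff] at hIμ
    refine Pphi.ext_of_m ((hgibbs hμ).2 ?_)
    linarith [(hgibbs hμ).1, (hu hμ).2, (hu hadm).2, hbar, hF hμ, hg hμ]

/-- sufficient conditions in the convex case: in the convex setting, an
admissible measure with the Gibbs density, satisfying the complementary slackness
condition and the support/orthogonality conditions, is the unique minimiser. -/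
theorem stmt11 {E : Type*} [MetricSpace E] [CompleteSpace E]
    [TopologicalSpace.SeparableSpace E] [MeasurableSpace E] [BorelSpace E]
    (φ : E → ℝ) (hφc : Continuous φ) (hφ0 : ∀ x, 0 ≤ φ x)
    (ν : Measure E) [IsProbabilityMeasure ν]
    (hexp : ∀ α : ℝ, 0 < α → ∫⁻ x, ENNReal.ofReal (Real.exp (α * φ x)) ∂ν < ⊤)
    (F : Pphi E φ → EReal) (hFbot : ∀ μ, F μ ≠ ⊥)
    (I : Pphi E φ → EReal) (hI : I = fun μ => relEnt μ.m ν + F μ)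
    (hIlsc : LowerSemicontinuous I)
    (S : Type*) (ζ : S → E → ℝ) (hζc : ∀ s, Continuous (ζ s))
    (Cζ : S → ℝ) (hCζ : ∀ s, 0 ≤ Cζ s) (hζb : ∀ s x, |ζ s x| ≤ Cζ s * (1 + φ x))
    (T : Type*) [MetricSpace T] [CompactSpace T] [MeasurableSpace T] [BorelSpace T]
    (Ψ : T → Pphi E φ → ℝ) (hΨlsc : ∀ t, LowerSemicontinuous (Ψ t))
    -- (A7): convexity
    (hFconv : ∀ μ μ' : Pphi E φ, ∀ ε ∈ Icc (0:ℝ) 1,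
      F (μ.comb μ' ε) ≤ ((1 - ε : ℝ) : EReal) * F μ + ((ε : ℝ) : EReal) * F μ')
    (hΨconv : ∀ t, ∀ μ μ' : Pphi E φ, ∀ ε ∈ Icc (0:ℝ) 1,
      Ψ t (μ.comb μ' ε) ≤ (1 - ε) * Ψ t μ + ε * Ψ t μ')
    -- constraint sets and domain
    (DI : Set (Pphi E φ)) (hDI : DI = {μ | relEnt μ.m ν < ⊤ ∧ F μ < ⊤})
    (Aζ : Set (Pphi E φ)) (hAζ : Aζ = {μ | ∀ s, (∫ x, ζ s x ∂μ.m) = 0})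
    (AΨ : Set (Pphi E φ)) (hAΨ : AΨ = {μ | ∀ t, Ψ t μ ≤ 0})
    -- the candidate measure
    (μbar : Pphi E φ) (hadm : μbar ∈ DI ∩ (Aζ ∩ AΨ))
    -- (i): differentiability w.r.t. the directions D_I ∩ A^ζ_Ψ
    (DF : E → ℝ) (hDF : HasLFDerivWithinAtE (DI ∩ (Aζ ∩ AΨ)) F μbar DF)
    (DΨ : T → E → ℝ)
    (hDΨdiff : ∀ t, HasLFDerivWithinAt (DI ∩ (Aζ ∩ AΨ)) (Ψ t) μbar (DΨ t))
    -- (ii): measurability and domination of the derivatives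
    (hDΨmeas : Measurable (Function.uncurry DΨ))
    (DΨbd : ℝ) (hDΨbd0 : 0 ≤ DΨbd) (hDΨbd : ∀ t x, |DΨ t x| ≤ DΨbd * (1 + φ x))
    -- (iii): the Gibbs data
    (ζbar : E → ℝ) (hζbarint : Integrable ζbar μbar.m)
    (hζbarspan : ∃ g : ℕ → E → ℝ, (∀ n, g n ∈ Submodule.span ℝ (Set.range ζ)) ∧
      Filter.Tendsto (fun n => ∫ x, |g n x - ζbar x| ∂μbar.m) Filter.atTop (𝓝 0))
    (lam : Measure T) (hlamfin : IsFiniteMeasure lam)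
    (Sbar : Set E) (hSbarmeas : MeasurableSet Sbar) (hμSbar : μbar.m Sbar = 1)
    (hZpos : 0 < ∫⁻ x in Sbar,
      ENNReal.ofReal (Real.exp (-DF x - ζbar x - ∫ t, DΨ t x ∂lam)) ∂ν)
    (hZfin : (∫⁻ x in Sbar,
      ENNReal.ofReal (Real.exp (-DF x - ζbar x - ∫ t, DΨ t x ∂lam)) ∂ν) < ⊤)
    (hGibbs : μbar.m = ν.withDensity (fun x => Sbar.indicator (fun y =>
      (∫⁻ x' in Sbar,
        ENNReal.ofReal (Real.exp (-DF x' - ζbar x' - ∫ t, DΨ t x' ∂lam)) ∂ν)⁻¹ *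
        ENNReal.ofReal (Real.exp (-DF y - ζbar y - ∫ t, DΨ t y ∂lam))) x))
    (hslack : ∀ᵐ t ∂lam, Ψ t μbar = 0)
    -- (iv): support and orthogonality conditions
    (hνSbar : ν Sbar = 1)
    (hζbarorth : ∀ μ ∈ DI ∩ (Aζ ∩ AΨ), Integrable ζbar μ.m ∧ (∫ x, ζbar x ∂μ.m) = 0) :
    (∀ μ ∈ DI ∩ (Aζ ∩ AΨ), I μbar ≤ I μ) ∧
    (∀ μ ∈ DI ∩ (Aζ ∩ AΨ), I μ = I μbar → μ = μbar) :=
  stmt11_general φ hφc hφ0 ν F hFbot I hI T Ψ hFconv hΨconv DI hDI Aζ AΨ hAΨ μbar hadm DF hDF DΨ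
    hDΨdiff hDΨmeas DΨbd hDΨbd ζbar lam hlamfin Sbar hSbarmeas hZpos hZfin hGibbs hslack hνSbar
    hζbarorth
end
end
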